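/- arXiv:1907.12272 — 8 statements merged into one kernel-verified Lean document; each statement's English description precedes it below -/
import Mathlib

section
/- Let R^{(t)}(x) = (1 - t x + x^2 - sqrt((1 - t x + x^2)^2 - 4 x^2))/(2 x^2), the bivariate generating function of the RNA matrix powers, characterized as the unique formal power series g(x) with g(0)=1 satisfying g = 1 + x g * (t/(1 - x^2 g)). Then the coefficient of x^{2n} t^{2m} in R^{(t)}(x) equals N_{n+m, 2m} and the coefficient of x^{2n+1} t^{2m+1} equals N_{n+m+1, 2m+1}, where N_{n,m} = [x^m] N_n(x) are the Narayana numbers; moreover all coefficients of x^a t^b with a+b odd vanish. Concretely: [x^{2n} t^{2m}] R^{(t)}(x) = (1/(n+m)) binom(n+m, 2m-1) binom(n+m, 2m) for m >= 1, and [x^{2n+1} t^{2m+1}] R^{(t)}(x) = (1/(n+m+1)) binom(n+m+1, 2m) binom(n+m+1, 2m+1). -/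
/-- Narayana numbers: `Nar n m = [x^m] N_n(x)`. -/
noncomputable def Nar (n m : ℕ) : ℚ :=
  if n = 0 then (if m = 0 then 1 else 0)
  else if m = 0 then 0
  else (n.choose (m - 1) * n.choose m : ℚ) / n

lemma Nar_eq_zero_of_lt {n m : ℕ} (h : n < m) : Nar n m = 0 := by
  rcases n with _|n
  · simp [Nar]; omega
  · rw [Nar, if_neg (by omega), if_neg (by omega)]
    rw [Nat.choose_eq_zero_of_lt h]
    simp

lemma Nar_zero_right (n : ℕ) : Nar (n+1) 0 = 0 := by rw [Nar]; simp

lemma Nar_one_right (m : ℕ) : Nar (m+1) 1 = 1 := by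
  rw [Nar, if_neg (by omega), if_neg (by omega)]
  simp [Nat.choose_one_right]
  exact Nat.cast_add_one_ne_zero m

lemma Nar_self (m : ℕ) : Nar (m+1) (m+1) = 1 := by
  rw [Nar, if_neg (by omega), if_neg (by omega)]
  simp [Nat.choose_self, Nat.choose_succ_self_right]
  exact Nat.cast_add_one_ne_zero m

lemma cast_choose_two (m : ℕ) : ((m+1).choose 2 : ℚ) = (m+1)*m/2 := by
  have h := Nat.choose_succ_right_eq (m+1) 1
  simp [Nat.choose_one_right] at h
  have : (((m+1).choose 2 * 2 : ℕ) : ℚ) = (((m+1) * m : ℕ) : ℚ) := by rw [h]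
  push_cast at this
  linarith

lemma Nar_two_right (m : ℕ) : Nar (m+1) 2 = ((m:ℚ)+1)*m/2 := by
  rw [Nar, if_neg (by omega), if_neg (by omega)]
  simp [Nat.choose_one_right, cast_choose_two]
  field_simp

lemma Nar_pred (m : ℕ) : Nar (m+2) (m+1) = ((m:ℚ)+2)*((m:ℚ)+1)/2 := by
  rw [Nar, if_neg (by omega), if_neg (by omega)]
  have h1 : (m+2).choose (m+1-1) = (m+2).choose 2 := by
    rw [show m+1-1 = m from rfl, ← Nat.choose_symm (by omega)]
    congr 1; omega
  rw [h1, Nat.choose_succ_self_right]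
  rw [show m+2 = (m+1)+1 from rfl, cast_choose_two]
  push_cast
  field_simp
  ring

lemma choose_ratio (m k a : ℕ) (h : m - k = a) :
    (m.choose (k+1) : ℚ) * ((k:ℚ)+1) = (m.choose k : ℚ) * (a:ℚ) := by
  have h2 := Nat.choose_succ_right_eq m k
  rw [h] at h2
  have h3 := congrArg (Nat.cast : ℕ → ℚ) h2
  push_cast at h3
  linarith

lemma Nar_eq (n m : ℕ) (hn : n ≠ 0) (hm : m ≠ 0) :
    Nar n m = (n.choose (m-1) : ℚ) * n.choose m / n := by
  rw [Nar, if_neg hn, if_neg hm]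

set_option maxHeartbeats 2000000 in
lemma key (q b : ℕ) :
    (2*(q:ℚ)+8-b) * Nar (q+4) (b+2)
    = (4*(q:ℚ)+13-2*b) * Nar (q+3) (b+1)
    + 2*(2*(q:ℚ)+5-b) * Nar (q+3) (b+2)
    - (2*(q:ℚ)+5-b) * Nar (q+2) b
    + (4*(q:ℚ)+7-2*b) * Nar (q+2) (b+1)
    - (2*(q:ℚ)+2-b) * Nar (q+2) (b+2) := by
  have two_val : ∀ m : ℕ, Nar (m+1) 2 = ((m:ℚ)+1)*(m:ℚ)/2 := Nar_two_right
  by_cases hb0 : b = 0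
  · subst hb0
    have vA : Nar (q+4) 2 = ((q:ℚ)+4)*((q:ℚ)+3)/2 := by
      have h := Nar_two_right (q+3)
      rw [show q+3+1 = q+4 from by omega] at h
      rw [h]; push_cast; ring
    have vC : Nar (q+3) 2 = ((q:ℚ)+3)*((q:ℚ)+2)/2 := by
      have h := Nar_two_right (q+2)
      rw [show q+2+1 = q+3 from by omega] at h
      rw [h]; push_cast; ring
    have vF : Nar (q+2) 2 = ((q:ℚ)+2)*((q:ℚ)+1)/2 := by
      have h := Nar_two_right (q+1)
      rw [show q+1+1 = q+2 from by omega] at h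
      rw [h]; push_cast; ring
    have vB : Nar (q+3) 1 = 1 := by
      have h := Nar_one_right (q+2); rw [show q+2+1 = q+3 from by omega] at h; exact h
    have vE : Nar (q+2) 1 = 1 := by
      have h := Nar_one_right (q+1); rw [show q+1+1 = q+2 from by omega] at h; exact h
    have vD : Nar (q+2) 0 = 0 := by
      have h := Nar_zero_right (q+1); rw [show q+1+1 = q+2 from by omega] at h; exact h
    simp only [Nat.zero_add, show (0:ℕ)+2 = 2 from rfl, show (0:ℕ)+1 = 1 from rfl]
    rw [vA, vB, vC, vD, vE, vF]
    push_cast; ring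
  rcases Nat.lt_or_ge q b with hbq | hbq
  · -- b ≥ q+1
    rcases Nat.lt_or_ge (q+2) b with h3 | h3
    · -- b ≥ q+3 : all zero
      rw [Nar_eq_zero_of_lt (by omega), Nar_eq_zero_of_lt (by omega),
        Nar_eq_zero_of_lt (by omega), Nar_eq_zero_of_lt (by omega),
        Nar_eq_zero_of_lt (by omega), Nar_eq_zero_of_lt (by omega)]
      ring
    rcases Nat.eq_or_lt_of_le h3 with h4 | h4
    · -- b = q+2
      obtain rfl : b = q+2 := by omega
      have vA : Nar (q+4) (q+2+2) = 1 := by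
        have h := Nar_self (q+3)
        rw [show q+3+1 = q+4 from by omega] at h
        rw [show q+2+2 = q+4 from by omega]
        exact h
      have vB : Nar (q+3) (q+2+1) = 1 := by
        have h := Nar_self (q+2)
        rw [show q+2+1 = q+3 from by omega] at h ⊢
        exact h
      have vD : Nar (q+2) (q+2) = 1 := by
        have h := Nar_self (q+1)
        rw [show q+1+1 = q+2 from by omega] at h
        exact h
      rw [vA, vB, vD, Nar_eq_zero_of_lt (by omega), Nar_eq_zero_of_lt (by omega),
        Nar_eq_zero_of_lt (by omega)]
      push_cast; ring
    · -- b = q+1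
      obtain rfl : b = q+1 := by omega
      have vA : Nar (q+4) (q+1+2) = ((q:ℚ)+4)*((q:ℚ)+3)/2 := by
        have h := Nar_pred (q+2)
        rw [show q+2+2 = q+4 from by omega, show q+2+1 = q+1+2 from by omega] at h
        rw [h]; push_cast; ring
      have vB : Nar (q+3) (q+1+1) = ((q:ℚ)+3)*((q:ℚ)+2)/2 := by
        have h := Nar_pred (q+1)
        rw [show q+1+2 = q+3 from by omega] at h
        rw [h]; push_cast; ring
      have vC : Nar (q+3) (q+1+2) = 1 := by
        have h := Nar_self (q+2)
        rw [show q+2+1 = q+3 from by omega] at h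
        rw [show q+1+2 = q+3 from by omega]
        exact h
      have vD : Nar (q+2) (q+1) = ((q:ℚ)+2)*((q:ℚ)+1)/2 := Nar_pred q
      have vE : Nar (q+2) (q+1+1) = 1 := by
        have h := Nar_self (q+1)
        rw [show q+1+1 = q+2 from by omega] at h ⊢
        exact h
      rw [vA, vB, vC, vD, vE, Nar_eq_zero_of_lt (by omega)]
      push_cast; ring
  · -- generic : 1 ≤ b ≤ q
    obtain ⟨s, rfl⟩ : ∃ s, b = s+1 := ⟨b-1, by omega⟩
    obtain ⟨j, rfl⟩ : ∃ j, q = s+1+j := ⟨q-s-1, by omega⟩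
    have r1 := choose_ratio (s+j+3) s (j+3) (by omega)
    have r2 := choose_ratio (s+j+3) (s+1) (j+2) (by omega)
    have r3 := choose_ratio (s+j+3) (s+2) (j+1) (by omega)
    simp only [show s+1+1 = s+2 from rfl, show s+2+1 = s+3 from rfl] at r1 r2 r3
    push_cast at r1 r2 r3
    have c1 : ((s+j+3).choose (s+1) : ℚ) = (s+j+3).choose s * ((j:ℚ)+3)/((s:ℚ)+1) := by
      rw [eq_div_iff (by positivity)]; linear_combination r1
    have c2 : ((s+j+3).choose (s+2) : ℚ)
        = (s+j+3).choose s * (((j:ℚ)+3)*((j:ℚ)+2))/(((s:ℚ)+1)*((s:ℚ)+2)) := by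
      rw [eq_div_iff (by positivity)]
      linear_combination ((j:ℚ)+2)*r1 + ((s:ℚ)+1)*r2
    have c3 : ((s+j+3).choose (s+3) : ℚ)
        = (s+j+3).choose s * (((j:ℚ)+3)*((j:ℚ)+2)*((j:ℚ)+1))/(((s:ℚ)+1)*((s:ℚ)+2)*((s:ℚ)+3)) := by
      rw [eq_div_iff (by positivity)]
      linear_combination ((j:ℚ)+1)*((j:ℚ)+2)*r1 + ((s:ℚ)+1)*((j:ℚ)+1)*r2
        + ((s:ℚ)+1)*((s:ℚ)+2)*r3
    have pasc1 : (s+j+4).choose (s+1) = (s+j+3).choose s + (s+j+3).choose (s+1) := by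
      rw [show s+j+4 = (s+j+3)+1 from by omega]; exact Nat.choose_succ_succ _ _
    have pasc2 : (s+j+4).choose (s+2) = (s+j+3).choose (s+1) + (s+j+3).choose (s+2) := by
      rw [show s+j+4 = (s+j+3)+1 from by omega, show s+2 = (s+1)+1 from rfl]
      exact Nat.choose_succ_succ _ _
    have pasc3 : (s+j+4).choose (s+3) = (s+j+3).choose (s+2) + (s+j+3).choose (s+3) := by
      rw [show s+j+4 = (s+j+3)+1 from by omega, show s+3 = (s+2)+1 from rfl]
      exact Nat.choose_succ_succ _ _
    have pasc4 : (s+j+5).choose (s+2) = (s+j+4).choose (s+1) + (s+j+4).choose (s+2) := by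
      rw [show s+j+5 = (s+j+4)+1 from by omega, show s+2 = (s+1)+1 from rfl]
      exact Nat.choose_succ_succ _ _
    have pasc5 : (s+j+5).choose (s+3) = (s+j+4).choose (s+2) + (s+j+4).choose (s+3) := by
      rw [show s+j+5 = (s+j+4)+1 from by omega, show s+3 = (s+2)+1 from rfl]
      exact Nat.choose_succ_succ _ _
    rw [Nar_eq _ _ (by omega) (by omega), Nar_eq _ _ (by omega) (by omega),
      Nar_eq _ _ (by omega) (by omega), Nar_eq _ _ (by omega) (by omega),
      Nar_eq _ _ (by omega) (by omega), Nar_eq _ _ (by omega) (by omega)]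
    rw [show s+1+j+4 = s+j+5 from by omega, show s+1+j+3 = s+j+4 from by omega,
      show s+1+j+2 = s+j+3 from by omega, show s+1+2-1 = s+2 from by omega,
      show s+1+2 = s+3 from by omega, show s+1+1-1 = s+1 from by omega,
      show s+1+1 = s+2 from by omega, show s+1-1 = s from by omega]
    rw [pasc4, pasc5, pasc1, pasc2, pasc3]
    push_cast
    rw [c1, c2, c3]
    have hs1 : ((s:ℚ)+1) ≠ 0 := by positivity
    have hs2 : ((s:ℚ)+2) ≠ 0 := by positivity
    have hs3 : ((s:ℚ)+3) ≠ 0 := by positivity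
    have hm3 : ((s:ℚ)+(j:ℚ)+3) ≠ 0 := by positivity
    have hm4 : ((s:ℚ)+(j:ℚ)+4) ≠ 0 := by positivity
    have hm5 : ((s:ℚ)+(j:ℚ)+5) ≠ 0 := by positivity
    field_simp
    ring


noncomputable def Acoef (n b : ℕ) : ℚ :=
  if (n + b) % 2 = 0 then Nar ((n+b)/2) b else 0

lemma Acoef_big {n b : ℕ} (h : n < b) : Acoef n b = 0 := by
  rw [Acoef]
  split_ifs with hp
  · exact Nar_eq_zero_of_lt (by omega)
  · rfl

lemma Acoef_zero (m : ℕ) : Acoef (m+1) 0 = 0 := by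
  rw [Acoef]
  split_ifs with hp
  · have : (m+1+0)/2 ≥ 1 := by omega
    obtain ⟨k, hk⟩ : ∃ k, (m+1+0)/2 = k+1 := ⟨(m+1+0)/2 - 1, by omega⟩
    rw [hk]; exact Nar_zero_right k
  · rfl

lemma k0 (n : ℕ) : ((n:ℚ)+7) * Acoef (n+5) 0
    = 2*((n:ℚ)+4) * Acoef (n+3) 0 - ((n:ℚ)+1) * Acoef (n+1) 0 := by
  rw [show n+5 = (n+4)+1 from by omega, show n+3 = (n+2)+1 from by omega,
    show n+1 = n+1 from rfl, Acoef_zero, Acoef_zero, Acoef_zero]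
  ring

lemma k1 (n : ℕ) : ((n:ℚ)+7) * Acoef (n+5) 1
    = (2*(n:ℚ)+11) * Acoef (n+4) 0
    + 2*((n:ℚ)+4) * Acoef (n+3) 1
    + (2*(n:ℚ)+5) * Acoef (n+2) 0
    - ((n:ℚ)+1) * Acoef (n+1) 1 := by
  rw [show n+4 = (n+3)+1 from by omega, Acoef_zero,
    show n+2 = (n+1)+1 from by omega, Acoef_zero]
  rcases Nat.even_or_odd n with ⟨p, hp⟩ | ⟨p, hp⟩
  · -- n = 2p : nonzero values
    subst hp
    have v : ∀ k : ℕ, Acoef (2*p+2*k+1) 1 = 1 := by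
      intro k
      rw [Acoef, if_pos (by omega), show (2*p+2*k+1+1)/2 = (p+k)+1 from by omega]
      exact Nar_one_right _
    have v5 := v 2
    have v3 := v 1
    have v1 := v 0
    rw [show p+p+5 = 2*p+2*2+1 from by omega, v5,
      show p+p+3 = 2*p+2*1+1 from by omega, v3,
      show p+p+1 = 2*p+2*0+1 from by omega, v1]
    push_cast; ring
  · subst hp
    have v : ∀ k : ℕ, Acoef (2*p+2*k) 1 = 0 := by
      intro k
      rw [Acoef, if_neg (by omega)]
    rw [show 2*p+1+5 = 2*p+2*3 from by omega, v 3,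
      show 2*p+1+3 = 2*p+2*2 from by omega, v 2,
      show 2*p+1+1 = 2*p+2*1 from by omega, v 1]
    ring

lemma k2 (n b : ℕ) : ((n:ℚ)+7) * Acoef (n+5) (b+2)
    = (2*(n:ℚ)+11) * Acoef (n+4) (b+1)
    + 2*((n:ℚ)+4) * Acoef (n+3) (b+2)
    - ((n:ℚ)+4) * Acoef (n+3) b
    + (2*(n:ℚ)+5) * Acoef (n+2) (b+1)
    - ((n:ℚ)+1) * Acoef (n+1) (b+2) := by
  rcases Nat.even_or_odd (n+b) with ⟨p, hp⟩ | ⟨p, hp⟩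
  · -- n+b even : all terms vanish
    rw [Acoef, if_neg (by omega), Acoef, if_neg (by omega), Acoef, if_neg (by omega),
      Acoef, if_neg (by omega), Acoef, if_neg (by omega), Acoef, if_neg (by omega)]
    ring
  · -- n+b = 2p+1
    rw [Acoef, if_pos (by omega), show (n+5+(b+2))/2 = p+4 from by omega,
      Acoef, if_pos (by omega), show (n+4+(b+1))/2 = p+3 from by omega,
      Acoef, if_pos (by omega), show (n+3+(b+2))/2 = p+3 from by omega,
      Acoef, if_pos (by omega), show (n+3+b)/2 = p+2 from by omega,
      Acoef, if_pos (by omega), show (n+2+(b+1))/2 = p+2 from by omega,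
      Acoef, if_pos (by omega), show (n+1+(b+2))/2 = p+2 from by omega]
    have hcast : (n:ℚ) = 2*(p:ℚ)+1-(b:ℚ) := by
      have : (((n+b):ℕ) : ℚ) = ((2*p+1 : ℕ) : ℚ) := by rw [hp]
      push_cast at this; linarith
    rw [hcast]
    linear_combination key p b


local notation "Rg" => Polynomial ℚ
local notation "XX" => (PowerSeries.X : PowerSeries (Polynomial ℚ))
local notation "cc" => PowerSeries.C (R := Polynomial ℚ) Polynomial.X

open PowerSeries in
lemma coeff_g_eq (g : PowerSeries (Polynomial ℚ))
    (h0 : PowerSeries.constantCoeff (R := Polynomial ℚ) g = 1)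
    (heq : (1 - PowerSeries.X ^ 2 * g) * g
      = (1 - PowerSeries.X ^ 2 * g)
        + PowerSeries.C (R := Polynomial ℚ) Polynomial.X * PowerSeries.X * g) :
    ∀ n b : ℕ, (PowerSeries.coeff (R := Polynomial ℚ) n g).coeff b = Acoef n b := by
  have hP : XX^2*g^2 + (cc*XX - XX^2 - 1)*g + 1 = 0 := by
    linear_combination -heq
  have hQ : (2*XX^2*g + (cc*XX - XX^2 - 1)) * (PowerSeries.derivative Rg g)
      + 2*XX*g^2 + (cc - 2*XX)*g = 0 := by
    have h1 := congrArg (⇑(PowerSeries.derivative Rg)) hP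
    simp only [Derivation.leibniz, Derivation.leibniz_pow, PowerSeries.derivative_X,
      PowerSeries.derivative_C, map_add, map_sub, map_one, Derivation.map_one_eq_zero, map_zero,
      smul_eq_mul, nsmul_eq_mul] at h1
    linear_combination h1
  have hR : XX^6 * PowerSeries.derivative Rg g
      - cc * (XX^5 * PowerSeries.derivative Rg g) - cc * (XX^5 * PowerSeries.derivative Rg g)
      + cc^2 * (XX^4 * PowerSeries.derivative Rg g)
      - (XX^4 * PowerSeries.derivative Rg g) - (XX^4 * PowerSeries.derivative Rg g)
      - cc * (XX^3 * PowerSeries.derivative Rg g) - cc * (XX^3 * PowerSeries.derivative Rg g)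
      + XX^2 * PowerSeries.derivative Rg g
      - cc * (XX^4 * g) - (XX^3*g) - (XX^3*g) + cc^2 * (XX^3*g)
      - cc * (XX^2*g) - cc * (XX^2*g) - cc * (XX^2*g)
      + (XX*g) + (XX*g)
      + XX^3 + XX^3 - XX - XX = 0 := by
    linear_combination ((-4)*XX^4* PowerSeries.derivative Rg g - 4*XX^3*g
        + 2*XX*(cc*XX-XX^2-1) - 2*XX^2*(cc-2*XX)) * hP
      + (XX^2*(2*XX^2*g + (cc*XX-XX^2-1))) * hQ
  have ext0 : ∀ d : ℕ, (PowerSeries.coeff (R := Rg) d) (XX^6 * PowerSeries.derivative Rg g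
      - cc * (XX^5 * PowerSeries.derivative Rg g) - cc * (XX^5 * PowerSeries.derivative Rg g)
      + cc^2 * (XX^4 * PowerSeries.derivative Rg g)
      - (XX^4 * PowerSeries.derivative Rg g) - (XX^4 * PowerSeries.derivative Rg g)
      - cc * (XX^3 * PowerSeries.derivative Rg g) - cc * (XX^3 * PowerSeries.derivative Rg g)
      + XX^2 * PowerSeries.derivative Rg g
      - cc * (XX^4 * g) - (XX^3*g) - (XX^3*g) + cc^2 * (XX^3*g)
      - cc * (XX^2*g) - cc * (XX^2*g) - cc * (XX^2*g)
      + (XX*g) + (XX*g)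
      + XX^3 + XX^3 - XX - XX) = 0 := by
    intro d; rw [hR, map_zero]
  have h0' : PowerSeries.coeff (R := Rg) 0 g = 1 := by
    rw [PowerSeries.coeff_zero_eq_constantCoeff]; exact h0
  have e1 : PowerSeries.coeff (R := Rg) 1 g = Polynomial.X := by
    have hx := ext0 2
    simp only [← map_pow] at hx
    rw [show (XX*g) = XX^1*g by ring] at hx
    simp only [map_add, map_sub, map_zero, PowerSeries.coeff_C_mul,
      PowerSeries.coeff_X_pow_mul', PowerSeries.coeff_X_pow, PowerSeries.coeff_X,
      PowerSeries.coeff_derivative] at hx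
    norm_num [h0'] at hx
    have h3 : (3:Rg) * PowerSeries.coeff (R := Rg) 1 g = 3 * Polynomial.X := by linear_combination hx
    exact mul_left_cancel₀ (by norm_num : (3:Rg) ≠ 0) h3
  have e2 : PowerSeries.coeff (R := Rg) 2 g = Polynomial.X^2 := by
    have hx := ext0 3
    simp only [← map_pow] at hx
    rw [show (XX*g) = XX^1*g by ring] at hx
    simp only [map_add, map_sub, map_zero, PowerSeries.coeff_C_mul,
      PowerSeries.coeff_X_pow_mul', PowerSeries.coeff_X_pow, PowerSeries.coeff_X,
      PowerSeries.coeff_derivative] at hx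
    norm_num [h0', e1] at hx
    have h4 : (4:Rg) * PowerSeries.coeff (R := Rg) 2 g = 4 * Polynomial.X^2 := by linear_combination hx
    exact mul_left_cancel₀ (by norm_num : (4:Rg) ≠ 0) h4
  have e3 : PowerSeries.coeff (R := Rg) 3 g = Polynomial.X^3 + Polynomial.X := by
    have hx := ext0 4
    simp only [← map_pow] at hx
    rw [show (XX*g) = XX^1*g by ring] at hx
    simp only [map_add, map_sub, map_zero, PowerSeries.coeff_C_mul,
      PowerSeries.coeff_X_pow_mul', PowerSeries.coeff_X_pow, PowerSeries.coeff_X,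
      PowerSeries.coeff_derivative] at hx
    norm_num [h0', e1, e2] at hx
    have h5 : (5:Rg) * PowerSeries.coeff (R := Rg) 3 g
        = 5 * (Polynomial.X^3 + Polynomial.X) := by linear_combination hx
    exact mul_left_cancel₀ (by norm_num : (5:Rg) ≠ 0) h5
  have e4 : PowerSeries.coeff (R := Rg) 4 g
      = Polynomial.X^4 + Polynomial.C 3 * Polynomial.X^2 := by
    have hx := ext0 5
    simp only [← map_pow] at hx
    rw [show (XX*g) = XX^1*g by ring] at hx
    simp only [map_add, map_sub, map_zero, PowerSeries.coeff_C_mul,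
      PowerSeries.coeff_X_pow_mul', PowerSeries.coeff_X_pow, PowerSeries.coeff_X,
      PowerSeries.coeff_derivative] at hx
    norm_num [h0', e1, e2, e3] at hx
    have h6 : (6:Rg) * PowerSeries.coeff (R := Rg) 4 g
        = 6 * (Polynomial.X^4 + Polynomial.C 3 * Polynomial.X^2) := by
      rw [show Polynomial.C (3:ℚ) = (3:Rg) from map_ofNat (Polynomial.C : ℚ →+* Polynomial ℚ) 3]
      linear_combination hx
    exact mul_left_cancel₀ (by norm_num : (6:Rg) ≠ 0) h6
  have hrec : ∀ n : ℕ, ((n+7 : ℕ) : Rg) * (PowerSeries.coeff (R := Rg) (n+5) g)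
      = ((2*n+11 : ℕ) : Rg) * (Polynomial.X * PowerSeries.coeff (R := Rg) (n+4) g)
      + ((2*n+8 : ℕ) : Rg) * (PowerSeries.coeff (R := Rg) (n+3) g)
      - ((n+4 : ℕ) : Rg) * (Polynomial.X^2 * PowerSeries.coeff (R := Rg) (n+3) g)
      + ((2*n+5 : ℕ) : Rg) * (Polynomial.X * PowerSeries.coeff (R := Rg) (n+2) g)
      - ((n+1 : ℕ) : Rg) * (PowerSeries.coeff (R := Rg) (n+1) g) := by
    intro n
    have hx := ext0 (n+6)
    have E : ∀ (k d : ℕ) (f : PowerSeries Rg), d + k = n + 6 →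
        PowerSeries.coeff (R := Rg) (n+6) (XX^k * f) = PowerSeries.coeff (R := Rg) d f := by
      intro k d f h; rw [← h, PowerSeries.coeff_X_pow_mul]
    simp only [← map_pow] at hx
    simp only [map_add, map_sub, map_zero, PowerSeries.coeff_C_mul,
      E 6 n _ rfl, E 5 (n+1) _ (by omega), E 4 (n+2) _ (by omega), E 3 (n+3) _ (by omega),
      E 2 (n+4) _ (by omega),
      PowerSeries.coeff_derivative] at hx
    rw [show (XX*g) = XX^1*g by ring] at hx
    rw [E 1 (n+5) g (by omega)] at hx
    rw [PowerSeries.coeff_X_pow, PowerSeries.coeff_X] at hx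
    simp only [if_neg (by omega : ¬ n+6 = 3), if_neg (by omega : ¬ n+6 = 1)] at hx
    push_cast at hx ⊢
    linear_combination hx
  intro n
  induction n using Nat.strong_induction_on with
  | _ n ih =>
    match n, ih with
    | 0, _ =>
      intro b
      rw [h0']
      match b with
      | 0 => norm_num [Acoef, Nar, Polynomial.coeff_one]
      | (b+1) =>
        rw [Acoef_big (by omega)]
        simp [Polynomial.coeff_one]
    | 1, _ =>
      intro b
      rw [e1]
      match b with
      | 0 => norm_num [Acoef]
      | 1 => norm_num [Acoef, Nar, Nat.choose]
      | (b+2) =>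
        rw [Acoef_big (by omega)]
        rw [Polynomial.coeff_X]
        norm_num
    | 2, _ =>
      intro b
      rw [e2]
      match b with
      | 0 => norm_num [Acoef, Nar, Polynomial.coeff_X_pow]
      | 1 => norm_num [Acoef, Polynomial.coeff_X_pow]
      | 2 => norm_num [Acoef, Nar, Nat.choose, Polynomial.coeff_X_pow]
      | (b+3) =>
        rw [Acoef_big (by omega), Polynomial.coeff_X_pow, if_neg (by omega : ¬ b+3 = 2)]
    | 3, _ =>
      intro b
      rw [e3]
      match b with
      | 0 => norm_num [Acoef, Polynomial.coeff_X_pow, Polynomial.coeff_X]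
      | 1 => norm_num [Acoef, Nar, Nat.choose, Polynomial.coeff_X_pow, Polynomial.coeff_X]
      | 2 => norm_num [Acoef, Polynomial.coeff_X_pow, Polynomial.coeff_X]
      | 3 => norm_num [Acoef, Nar, Nat.choose, Polynomial.coeff_X_pow, Polynomial.coeff_X]
      | (b+4) =>
        rw [Acoef_big (by omega)]
        simp [Polynomial.coeff_X_pow, Polynomial.coeff_X]
    | 4, _ =>
      intro b
      rw [e4]
      match b with
      | 0 => norm_num [Acoef, Nar, Polynomial.coeff_X_pow]
      | 1 => norm_num [Acoef, Polynomial.coeff_X_pow]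
      | 2 => norm_num [Acoef, Nar, Nat.choose, Polynomial.coeff_X_pow]
      | 3 => norm_num [Acoef, Polynomial.coeff_X_pow]
      | 4 => norm_num [Acoef, Nar, Nat.choose, Polynomial.coeff_X_pow]
      | (b+5) =>
        rw [Acoef_big (by omega)]
        simp [Polynomial.coeff_X_pow]
    | (m+5), ih =>
      intro b
      have ih4 := ih (m+4) (by omega)
      have ih3 := ih (m+3) (by omega)
      have ih2 := ih (m+2) (by omega)
      have ih1 := ih (m+1) (by omega)
      have cX0 : ∀ p : Rg, (Polynomial.X*p).coeff 0 = 0 := by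
        intro p
        rw [Polynomial.mul_coeff_zero, Polynomial.coeff_X_zero, zero_mul]
      have cXs : ∀ (p : Rg) (d : ℕ), (Polynomial.X*p).coeff (d+1) = p.coeff d :=
        fun p d => Polynomial.coeff_X_mul p d
      have hx := congrArg (fun p => Polynomial.coeff p b) (hrec m)
      simp only [← Polynomial.C_eq_natCast, Polynomial.coeff_add, Polynomial.coeff_sub,
        Polynomial.coeff_C_mul] at hx
      rw [show (Polynomial.X^2 : Rg) = Polynomial.X*Polynomial.X from by ring,
        mul_assoc] at hx
      have key7 : ((m+7 : ℕ) : ℚ) * (PowerSeries.coeff (R := Rg) (m+5) g).coeff b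
          = ((m+7 : ℕ) : ℚ) * Acoef (m+5) b := by
        match b with
        | 0 =>
          rw [cX0, cX0, cX0] at hx
          rw [ih3, ih1] at hx
          have hk := k0 m
          push_cast at hx hk ⊢
          linear_combination hx - hk
        | 1 =>
          rw [show (1:ℕ) = 0+1 from rfl] at hx
          rw [cXs, cXs, cXs, cX0] at hx
          rw [ih4, ih3, ih2, ih1] at hx
          have hk := k1 m
          push_cast at hx hk ⊢
          linear_combination hx - hk
        | (b+2) =>
          rw [show b+2 = (b+1)+1 from rfl] at hx
          rw [cXs, cXs, cXs, cXs, ih4, ih3, ih2, ih1] at hx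
          rw [ih3] at hx
          have hk := k2 m b
          push_cast at hx hk ⊢
          linear_combination hx - hk
      have h7 : ((m+7 : ℕ) : ℚ) ≠ 0 := by positivity
      exact mul_left_cancel₀ h7 key7


/-- Coefficients of the bivariate generating function `R^{(t)}(x)` of the RNA matrix powers,
characterized as the unique series `g` over `ℚ[t]` with `g(0) = 1` satisfying
`g = 1 + x g t/(1 - x² g)` (in cleared-denominator form). -/
theorem stmt1 (g : PowerSeries (Polynomial ℚ))
    (h0 : PowerSeries.constantCoeff (R := Polynomial ℚ) g = 1)
    (heq : (1 - PowerSeries.X ^ 2 * g) * g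
      = (1 - PowerSeries.X ^ 2 * g)
        + PowerSeries.C (R := Polynomial ℚ) Polynomial.X * PowerSeries.X * g) :
    (∀ n m : ℕ,
      (PowerSeries.coeff (R := Polynomial ℚ) (2 * n) g).coeff (2 * m) = Nar (n + m) (2 * m)) ∧
    (∀ n m : ℕ,
      (PowerSeries.coeff (R := Polynomial ℚ) (2 * n + 1) g).coeff (2 * m + 1)
        = Nar (n + m + 1) (2 * m + 1)) ∧
    (∀ a b : ℕ, Odd (a + b) → (PowerSeries.coeff (R := Polynomial ℚ) a g).coeff b = 0) ∧
    (∀ n m : ℕ, 1 ≤ m →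
      (PowerSeries.coeff (R := Polynomial ℚ) (2 * n) g).coeff (2 * m)
        = (1 / (n + m) : ℚ) * (n + m).choose (2 * m - 1) * (n + m).choose (2 * m)) ∧
    (∀ n m : ℕ,
      (PowerSeries.coeff (R := Polynomial ℚ) (2 * n + 1) g).coeff (2 * m + 1)
        = (1 / (n + m + 1) : ℚ) * (n + m + 1).choose (2 * m) * (n + m + 1).choose (2 * m + 1)) := by
  have hA := coeff_g_eq g h0 heq
  refine ⟨?_, ?_, ?_, ?_, ?_⟩
  · intro n m
    rw [hA, Acoef, if_pos (by omega), show (2*n+2*m)/2 = n+m from by omega]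
  · intro n m
    rw [hA, Acoef, if_pos (by omega), show (2*n+1+(2*m+1))/2 = n+m+1 from by omega]
  · intro a b hodd
    obtain ⟨k, hk⟩ := hodd
    rw [hA, Acoef, if_neg (by omega)]
  · intro n m hm
    rw [hA, Acoef, if_pos (by omega), show (2*n+2*m)/2 = n+m from by omega,
      Nar, if_neg (by omega), if_neg (by omega)]
    push_cast
    ring
  · intro n m
    rw [hA, Acoef, if_pos (by omega), show (2*n+1+(2*m+1))/2 = n+m+1 from by omega,
      Nar, if_neg (by omega), if_neg (by omega)]
    push_cast
    ring
end

section
/- For formal power series: (1, x/(1-2t x)) = (1, x/sqrt(1-2t x)) composed with (1, x(t x + sqrt(t^2 x^2 + 1))). Concretely, if f(x) = x/sqrt(1 - 2 t x) and h(x) = x(t x + sqrt(t^2 x^2 + 1)), then h(f(x)) = x/(1 - 2 t x) as formal power series in x over Q[t], where sqrt denotes the formal power series square root with constant term 1. -/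
open PowerSeries

/-- `(1, x/(1-2tx)) = (1, x/√(1-2tx)) ∘ (1, x(tx + √(t²x²+1)))`: with
`f = X·v` where `v` is the constant-term-1 square root of `1/(1-2tx)`, and `u` the
constant-term-1 square root of `t²f² + 1`, one has `f·(t f + u) = x/(1-2tx)`
(stated with the denominator cleared). -/
theorem stmt5 {A : Type*} [CommRing A] [Algebra ℚ A] (t : A)
    (v u : PowerSeries A)
    (hv0 : constantCoeff v = 1)
    (hv : v ^ 2 * (1 - 2 * C t * X) = 1)
    (hu0 : constantCoeff u = 1)
    (hu : u ^ 2 = (C t) ^ 2 * (X * v) ^ 2 + 1) :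
    (X * v) * (C t * (X * v) + u) * (1 - 2 * C t * X) = X := by
  have key : (v * u * (1 - 2 * C t * X)) ^ 2 = (1 - C t * X) ^ 2 := by
    linear_combination (u ^ 2 * (1 - 2 * C t * X)) * hv +
      (1 - 2 * C t * X) * hu + (C t) ^ 2 * X ^ 2 * hv
  have h2 : (v * u * (1 - 2 * C t * X) - (1 - C t * X)) *
      (v * u * (1 - 2 * C t * X) + (1 - C t * X)) = 0 := by
    linear_combination key
  have hunit : IsUnit (v * u * (1 - 2 * C t * X) + (1 - C t * X)) := by
    rw [PowerSeries.isUnit_iff_constantCoeff]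
    simp [hv0, hu0]
    have : IsUnit ((2 : ℚ)) := isUnit_iff_ne_zero.mpr two_ne_zero
    have h := this.map (algebraMap ℚ A)
    rwa [map_ofNat, ← one_add_one_eq_two] at h
  have h3 : v * u * (1 - 2 * C t * X) - (1 - C t * X) = 0 :=
    (hunit.mul_left_eq_zero).mp h2
  linear_combination (C t * X ^ 2) * hv + X * h3
end

section
/- Let T_n(x) = (1/(n+1)) sum_{m=0}^n binom(n+1,m+1) binom(n+m+2,m) x^m and let Ñ_{n+1}(x) = (1/x) N_{n+1}(x) where N_n are the Narayana polynomials. Then T_n(x) = (1+x)^n Ñ_{n+1}(x/(1+x)) as polynomials, i.e. (1+x)^n * sum_{m=1}^{n+1} (1/(n+1)) binom(n+1, m-1) binom(n+1, m) (x/(1+x))^{m-1} = T_n(x). -/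
/-- The polynomials `T_n(x) = (1/(n+1)) ∑_{m=0}^n C(n+1,m+1) C(n+m+2,m) x^m` (OEIS A033282). -/
noncomputable def Tpoly (n : ℕ) : Polynomial ℚ :=
  (1 / (n + 1) : ℚ) • ∑ m ∈ Finset.range (n + 1),
    (((n + 1).choose (m + 1) * (n + m + 2).choose m : ℚ)) • Polynomial.X ^ m

lemma key_choose (n k : ℕ) (hk : k ≤ n) :
    ∑ j ∈ Finset.range (k+1), (n+1).choose j * ((n+1).choose (j+1) * (n-j).choose (k-j))
      = (n+1).choose (k+1) * (n+k+2).choose k := by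
  have h1 : ∀ j ∈ Finset.range (k+1),
      (n+1).choose j * ((n+1).choose (j+1) * (n-j).choose (k-j))
        = (n+1).choose (k+1) * ((n+1).choose j * (k+1).choose (k-j)) := by
    intro j hj
    have hj' : j ≤ k := Nat.lt_succ_iff.mp (Finset.mem_range.mp hj)
    have e1 : (n+1).choose (k+1) * (k+1).choose (j+1)
        = (n+1).choose (j+1) * (n-j).choose (k-j) := by
      have := Nat.choose_mul (n := n+1) (k := k+1) (s := j+1) (by omega)
      simpa [Nat.succ_sub_succ] using this
    have e2 : (k+1).choose (j+1) = (k+1).choose (k-j) := by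
      rw [← Nat.choose_symm (by omega : j+1 ≤ k+1)]
      congr 1
      omega
    rw [← e1, ← e2]
    ring
  rw [Finset.sum_congr rfl h1, ← Finset.mul_sum]
  congr 1
  have v := Nat.add_choose_eq (n+1) (k+1) k
  rw [Finset.Nat.sum_antidiagonal_eq_sum_range_succ_mk] at v
  have : n + 1 + (k + 1) = n + k + 2 := by omega
  rw [this] at v
  simpa using v.symm

lemma reindex (n : ℕ) :
    (∑ m ∈ Finset.Icc 1 (n + 1),
      (((n + 1).choose (m - 1) * (n + 1).choose m : ℚ) / (n + 1)) •
        (Polynomial.X ^ (m - 1) * (1 + Polynomial.X) ^ (n + 1 - m)))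
      = ∑ j ∈ Finset.range (n + 1),
        (((n + 1).choose j * (n + 1).choose (j + 1) : ℚ) / (n + 1)) •
          ((Polynomial.X : Polynomial ℚ) ^ j * (1 + Polynomial.X) ^ (n - j)) := by
  refine Finset.sum_nbij' (i := fun m => m - 1) (j := fun j => j + 1) ?_ ?_ ?_ ?_ ?_
  · intro m hm
    simp only [Finset.mem_Icc] at hm
    simp only [Finset.mem_range]
    omega
  · intro j hj
    simp only [Finset.mem_range] at hj
    simp only [Finset.mem_Icc]
    omega
  · intro m hm
    simp only [Finset.mem_Icc] at hm
    omega
  · intro j hj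
    omega
  · intro m hm
    simp only [Finset.mem_Icc] at hm
    have h1 : m - 1 + 1 = m := by omega
    have h2 : n + 1 - m = n - (m - 1) := by omega
    rw [h1, h2]

/-- `T_n(x) = (1+x)ⁿ Ñ_{n+1}(x/(1+x))` where `Ñ_{n+1}(x) = N_{n+1}(x)/x`: expanded,
`∑_{m=1}^{n+1} (1/(n+1)) C(n+1,m-1) C(n+1,m) x^{m-1} (1+x)^{n+1-m} = T_n(x)`. -/
theorem stmt8 (n : ℕ) :
    ∑ m ∈ Finset.Icc 1 (n + 1),
      (((n + 1).choose (m - 1) * (n + 1).choose m : ℚ) / (n + 1)) •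
        (Polynomial.X ^ (m - 1) * (1 + Polynomial.X) ^ (n + 1 - m))
      = Tpoly n := by
  rw [reindex, Tpoly]
  ext k
  rw [Polynomial.finset_sum_coeff, Polynomial.coeff_smul, Polynomial.finset_sum_coeff]
  simp only [Polynomial.coeff_smul, smul_eq_mul, Polynomial.coeff_X_pow]
  have hcoeff : ∀ j, (Polynomial.X ^ j * (1 + Polynomial.X) ^ (n - j) : Polynomial ℚ).coeff k
      = if j ≤ k then ((n-j).choose (k-j) : ℚ) else 0 := by
    intro j
    rw [mul_comm, Polynomial.coeff_mul_X_pow', Polynomial.coeff_one_add_X_pow]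
  simp only [hcoeff]
  simp only [mul_ite, mul_one, mul_zero]
  rw [Finset.sum_ite_eq (Finset.range (n+1)) k
    (fun m => (((n + 1).choose (m + 1) * (n + m + 2).choose m : ℚ)))]
  by_cases hk : k ≤ n
  · have hsub : Finset.range (k+1) ⊆ Finset.range (n+1) := by
      apply Finset.range_subset_range.2; omega
    rw [← Finset.sum_subset hsub (by
      intro j hj hjk
      simp only [Finset.mem_range] at hj hjk
      rw [if_neg (by omega)])]
    have hstep : ∀ j ∈ Finset.range (k+1),
        (if j ≤ k then (((n + 1).choose j * (n + 1).choose (j + 1) : ℚ) / (n + 1)) *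
            ((n-j).choose (k-j) : ℚ) else 0)
        = (((n+1).choose j * ((n+1).choose (j+1) * (n-j).choose (k-j)) : ℕ) : ℚ) / (n+1) := by
      intro j hj
      have hj' : j ≤ k := Nat.lt_succ_iff.mp (Finset.mem_range.mp hj)
      rw [if_pos hj']
      push_cast
      ring
    rw [Finset.sum_congr rfl hstep, ← Finset.sum_div, ← Nat.cast_sum, key_choose n k hk,
      if_pos (Finset.mem_range.mpr (by omega))]
    push_cast
    ring
  · rw [if_neg (by simp only [Finset.mem_range]; omega)]
    rw [Finset.sum_eq_zero, mul_zero]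
    intro j hj
    simp only [Finset.mem_range] at hj
    rw [if_pos (by omega : j ≤ k), Nat.choose_eq_zero_of_lt (by omega : n - j < k - j)]
    simp
end

section
/- Let g(x) be the unique formal power series with g(0)=1 satisfying g(x) = 1 + t x g(x) (1 + x^2 g(x)) over Q[t] (B-function t(1+x)), explicitly g(x) = (1 - t x - sqrt((1 - t x)^2 - 4 t x^3))/(2 t x^3). Then [x^{2n} t^{2m}] g(x) = C_{n-m} binom(n+m, 3m-n) and [x^{2n+1} t^{2m+1}] g(x) = C_{n-m} binom(n+1+m, 3m+1-n), where C_k = binom(2k,k)/(k+1) is the k-th Catalan number (interpreted as 0 for k<0), and coefficients of x^a t^b with a+b odd vanish. -/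
open PowerSeries Finset

noncomputable section Aux9

abbrev R9 := Polynomial ℚ

def u9 : PowerSeries R9 := PowerSeries.C Polynomial.X * PowerSeries.X

def w9 : PowerSeries R9 := PowerSeries.mk fun j => Polynomial.X ^ j

def Z9 : PowerSeries R9 := u9 * PowerSeries.X ^ 2 * w9 ^ 2

def S9 (a : ℕ) : PowerSeries R9 := ∑ k ∈ range (a + 1), catalan k • Z9 ^ k

lemma hw9 : (1 - u9) * w9 = 1 := by
  ext n
  rw [sub_mul, one_mul, map_sub, u9, mul_assoc, coeff_C_mul, coeff_one]
  cases n with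
  | zero => simp [w9, PowerSeries.coeff_mk]
  | succ n =>
    rw [if_neg (Nat.succ_ne_zero n)]
    have : (PowerSeries.X * w9 : PowerSeries R9) = w9 * PowerSeries.X ^ 1 := by ring
    rw [this, PowerSeries.coeff_mul_X_pow' , if_pos (Nat.le_add_left 1 n)]
    simp [w9, PowerSeries.coeff_mk, pow_succ, mul_comm]

lemma coeff_w9_pow (N a : ℕ) :
    PowerSeries.coeff a (w9 ^ (N + 1))
      = Polynomial.C (((N + a).choose a : ℚ)) * Polynomial.X ^ a := by
  induction N generalizing a with
  | zero => simp [w9, PowerSeries.coeff_mk]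
  | succ N ih =>
    rw [pow_succ, PowerSeries.coeff_mul]
    rw [Finset.Nat.sum_antidiagonal_eq_sum_range_succ_mk]
    have : ∀ i ∈ Finset.range (a + 1),
        PowerSeries.coeff i (w9 ^ (N + 1)) * PowerSeries.coeff (a - i) w9
          = Polynomial.C (((i + N).choose N : ℚ)) * Polynomial.X ^ a := by
      intro i hi
      rw [Finset.mem_range] at hi
      rw [ih, w9, PowerSeries.coeff_mk, mul_assoc, ← pow_add,
        Nat.add_sub_cancel' (Nat.lt_succ_iff.mp hi)]
      congr 3
      rw [add_comm N i]
      have := Nat.choose_symm (Nat.le_add_right i N)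
      simpa using this.symm
    rw [Finset.sum_congr rfl this, ← Finset.sum_mul, ← map_sum]
    congr 2
    rw [← Nat.cast_sum]
    rw [Nat.sum_range_add_choose a N]
    congr 1
    have : N + 1 + a = a + N + 1 := by omega
    rw [this]
    exact (Nat.choose_symm (by omega)).symm.trans (by congr 1; omega)

lemma Z9_pow (k : ℕ) :
    Z9 ^ k = PowerSeries.X ^ (3 * k) *
      (PowerSeries.C (Polynomial.X ^ k) * w9 ^ (2 * k)) := by
  rw [Z9, u9]
  rw [show PowerSeries.C Polynomial.X * PowerSeries.X * PowerSeries.X ^ 2 * w9 ^ 2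
      = PowerSeries.X ^ 3 * (PowerSeries.C Polynomial.X * w9 ^ 2) by ring]
  rw [mul_pow, ← pow_mul, mul_pow, ← map_pow, ← pow_mul]

lemma coeff_Z9_pow_zero {k j : ℕ} (h : j < 3 * k) :
    PowerSeries.coeff j (Z9 ^ k) = 0 := by
  rw [Z9_pow, PowerSeries.coeff_X_pow_mul', if_neg (by omega)]

lemma coeff_w9_mul_Z9_pow (a k : ℕ) :
    PowerSeries.coeff a (w9 * Z9 ^ k)
      = if 3 * k ≤ a then
          Polynomial.C (((a - k).choose (a - 3 * k) : ℚ)) * Polynomial.X ^ (a - 2 * k)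
        else 0 := by
  rw [Z9_pow, show w9 * (PowerSeries.X ^ (3 * k) *
      (PowerSeries.C (Polynomial.X ^ k) * w9 ^ (2 * k)))
      = PowerSeries.X ^ (3 * k) *
        (PowerSeries.C (Polynomial.X ^ k) * w9 ^ (2 * k + 1)) by ring]
  rw [PowerSeries.coeff_X_pow_mul']
  split_ifs with h
  · rw [coeff_C_mul, coeff_w9_pow]
    rw [show 2 * k + (a - 3 * k) = a - k by omega]
    rw [show a - 2 * k = k + (a - 3 * k) by omega, pow_add]
    ring
  · rfl

lemma coeff_S9_trunc {j a : ℕ} (h : j ≤ a) :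
    PowerSeries.coeff j (S9 a) = PowerSeries.coeff j (S9 j) := by
  rw [S9, S9, map_sum, map_sum]
  refine (Finset.sum_subset (by intro x hx; simp at *; omega) ?_).symm
  intro k hk hk2
  simp only [Finset.mem_range] at hk hk2
  rw [map_nsmul, coeff_Z9_pow_zero (by omega), smul_zero]

lemma tri9 {M : Type*} [AddCommMonoid M] (a : ℕ) (f : ℕ → ℕ → M)
    (hf : ∀ p q, a ≤ p + q → f p q = 0) :
    ∑ p ∈ range (a + 1), ∑ q ∈ range (a + 1), f p q
      = ∑ k ∈ range a, ∑ ij ∈ antidiagonal k, f ij.1 ij.2 := by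
  rw [← Finset.sum_product']
  rw [← Finset.sum_biUnion (by
    intro x hx y hy hxy
    simp only [Finset.disjoint_left]
    intro p hp hq
    rw [Finset.HasAntidiagonal.mem_antidiagonal] at hp hq
    exact hxy (hp ▸ hq ▸ rfl))]
  refine (Finset.sum_subset ?_ ?_).symm
  · intro x hx
    simp only [Finset.mem_biUnion, Finset.mem_range, Finset.HasAntidiagonal.mem_antidiagonal] at hx
    obtain ⟨k, hk, hk2⟩ := hx
    simp only [Finset.mem_product, Finset.mem_range]
    omega
  · intro x hx hnx
    simp only [Finset.mem_biUnion, Finset.mem_range, Finset.HasAntidiagonal.mem_antidiagonal] at hnx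
    push_neg at hnx
    by_cases hc : x.1 + x.2 < a
    · exact absurd hc (by simpa using hnx (x.1 + x.2))
    · exact hf _ _ (by omega)

lemma L2_9 (a : ℕ) :
    PowerSeries.coeff a (1 + Z9 * S9 a * S9 a) = PowerSeries.coeff a (S9 a) := by
  have expand : Z9 * S9 a * S9 a
      = ∑ p ∈ range (a + 1), ∑ q ∈ range (a + 1),
          (catalan p * catalan q) • Z9 ^ (p + q + 1) := by
    rw [S9, mul_assoc, Finset.sum_mul_sum, Finset.mul_sum]
    refine Finset.sum_congr rfl fun p _ => ?_
    rw [Finset.mul_sum]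
    refine Finset.sum_congr rfl fun q _ => ?_
    simp only [mul_smul_comm, smul_mul_assoc, smul_smul]
    rw [pow_add, pow_add, pow_one]
    rw [mul_comm Z9 (Z9 ^ p * Z9 ^ q), mul_comm (catalan q) (catalan p)]
  rw [map_add, expand, map_sum]
  simp_rw [map_sum, map_nsmul]
  rw [tri9 a _ (fun p q h => by
    rw [coeff_Z9_pow_zero (by omega), smul_zero])]
  have rhs : PowerSeries.coeff a (S9 a)
      = PowerSeries.coeff a (1 : PowerSeries R9)
        + ∑ k ∈ range a, catalan (k + 1) • PowerSeries.coeff a (Z9 ^ (k + 1)) := by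
    rw [S9, map_sum]
    rw [Finset.sum_range_succ']
    simp only [map_nsmul]
    rw [pow_zero, catalan_zero, one_smul, add_comm]
  rw [rhs]
  congr 1
  refine Finset.sum_congr rfl fun k hk => ?_
  rw [catalan_succ', Finset.sum_smul]
  refine Finset.sum_congr rfl fun ij hij => ?_
  rw [Finset.HasAntidiagonal.mem_antidiagonal] at hij
  rw [hij]

variable {g : PowerSeries R9}

lemma h_eq (heq : g = 1 + PowerSeries.C Polynomial.X * PowerSeries.X * g
    * (1 + PowerSeries.X ^ 2 * g)) :
    (1 - u9) * g = 1 + Z9 * ((1 - u9) * g) * ((1 - u9) * g) := by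
  have hg : g = w9 * ((1 - u9) * g) := by
    rw [← mul_assoc, mul_comm w9 (1 - u9), hw9, one_mul]
  have key : (1 - u9) * g = 1 + u9 * PowerSeries.X ^ 2 * g ^ 2 := by
    calc (1 - u9) * g = g - u9 * g := by ring
    _ = 1 + u9 * PowerSeries.X ^ 2 * g ^ 2 := by
        nth_rewrite 1 [heq]
        rw [u9]
        ring
  have key2 : Z9 * ((1 - u9) * g) * ((1 - u9) * g) = u9 * PowerSeries.X ^ 2 * g ^ 2 := by
    calc Z9 * ((1 - u9) * g) * ((1 - u9) * g)
        = u9 * PowerSeries.X ^ 2 * (w9 * ((1 - u9) * g)) ^ 2 := by rw [Z9]; ring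
      _ = u9 * PowerSeries.X ^ 2 * g ^ 2 := by rw [← hg]
  rw [key2]
  exact key

lemma hS9 (heq : g = 1 + PowerSeries.C Polynomial.X * PowerSeries.X * g
    * (1 + PowerSeries.X ^ 2 * g)) :
    ∀ a, PowerSeries.coeff a ((1 - u9) * g) = PowerSeries.coeff a (S9 a) := by
  intro a
  induction a using Nat.strong_induction_on with
  | _ a ih =>
    set h := (1 - u9) * g with hh
    rw [show h = 1 + Z9 * h * h from h_eq heq, ← L2_9 a]
    rw [map_add, map_add]
    congr 1
    rw [mul_assoc Z9 h h, mul_assoc Z9 (S9 a) (S9 a),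
      PowerSeries.coeff_mul, PowerSeries.coeff_mul]
    refine Finset.sum_congr rfl fun ic hic => ?_
    rw [Finset.HasAntidiagonal.mem_antidiagonal] at hic
    by_cases h3 : ic.1 < 3
    · rw [show PowerSeries.coeff ic.1 Z9 = 0 by
        simpa using coeff_Z9_pow_zero (k := 1) (by omega), zero_mul, zero_mul]
    · congr 1
      rw [PowerSeries.coeff_mul, PowerSeries.coeff_mul]
      refine Finset.sum_congr rfl fun jl hjl => ?_
      rw [Finset.HasAntidiagonal.mem_antidiagonal] at hjl
      have hj : jl.1 < a := by omega
      have hl : jl.2 < a := by omega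
      rw [ih jl.1 hj, ih jl.2 hl, coeff_S9_trunc (le_of_lt hj), coeff_S9_trunc (le_of_lt hl)]

lemma gcoeff (heq : g = 1 + PowerSeries.C Polynomial.X * PowerSeries.X * g
    * (1 + PowerSeries.X ^ 2 * g)) (a : ℕ) :
    PowerSeries.coeff a g
      = ∑ k ∈ range (a + 1),
          if 3 * k ≤ a then
            Polynomial.C ((catalan k * ((a - k).choose (a - 3 * k)) : ℚ))
              * Polynomial.X ^ (a - 2 * k)
          else 0 := by
  have hg : g = w9 * ((1 - u9) * g) := by
    rw [← mul_assoc, mul_comm w9 (1 - u9), hw9, one_mul]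
  have step1 : PowerSeries.coeff a g = PowerSeries.coeff a (w9 * S9 a) := by
    nth_rewrite 1 [hg]
    rw [PowerSeries.coeff_mul, PowerSeries.coeff_mul]
    refine Finset.sum_congr rfl fun ij hij => ?_
    rw [Finset.HasAntidiagonal.mem_antidiagonal] at hij
    congr 1
    rw [hS9 heq, coeff_S9_trunc (show ij.2 ≤ a by omega)]
  rw [step1, S9, Finset.mul_sum, map_sum]
  refine Finset.sum_congr rfl fun k hk => ?_
  rw [mul_smul_comm, map_nsmul, coeff_w9_mul_Z9_pow]
  split_ifs with hc
  · rw [nsmul_eq_mul, ← mul_assoc]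
    congr 1
    rw [← Polynomial.C_eq_natCast, ← map_mul]
  · simp

lemma cat_cast (K : ℕ) : ((2 * K).choose K : ℚ) / (K + 1) = (catalan K : ℚ) := by
  have h := succ_mul_catalan_eq_centralBinom K
  have h2 : ((K + 1 : ℕ) : ℚ) * (catalan K : ℚ) = ((2 * K).choose K : ℚ) := by
    rw [← Nat.cast_mul, h, Nat.centralBinom]
  push_cast at h2
  field_simp
  linarith [h2]

lemma term_coeff (a k b : ℕ) :
    ((if 3 * k ≤ a then
        Polynomial.C ((catalan k * ((a - k).choose (a - 3 * k)) : ℚ))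
          * Polynomial.X ^ (a - 2 * k)
      else 0) : R9).coeff b
    = if 3 * k ≤ a ∧ b + 2 * k = a then
        ((catalan k : ℚ) * ((a - k).choose (a - 3 * k) : ℚ)) else 0 := by
  split_ifs with h1 h2 h3
  · rw [Polynomial.coeff_C_mul, Polynomial.coeff_X_pow, if_pos (by omega), mul_one]
  · rw [Polynomial.coeff_C_mul, Polynomial.coeff_X_pow, if_neg (by omega), mul_zero]
  · omega
  · simp

end Aux9

/-- Catalan number `C_k`, interpreted as `0` for `k < 0`. -/
noncomputable def catC (k : ℤ) : ℚ :=
  if 0 ≤ k then ((2 * k.toNat).choose k.toNat : ℚ) / (k.toNat + 1) else 0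

/-- `binom(a, b)` for integers, `0` unless `0 ≤ b ≤ a`. -/
noncomputable def zchoose (a b : ℤ) : ℚ :=
  if 0 ≤ b ∧ b ≤ a then (a.toNat.choose b.toNat : ℚ) else 0

/-- Coefficients of the unique series `g` over `ℚ[t]` with `g(0)=1` and
`g = 1 + t x g (1 + x² g)` (B-function `t(1+x)`):
`[x^{2n}t^{2m}] g = C_{n-m} binom(n+m, 3m-n)`,
`[x^{2n+1}t^{2m+1}] g = C_{n-m} binom(n+1+m, 3m+1-n)`, other coefficients vanish. -/
theorem stmt9 (g : PowerSeries (Polynomial ℚ))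
    (h0 : PowerSeries.constantCoeff g = 1)
    (heq : g = 1 + PowerSeries.C Polynomial.X * PowerSeries.X * g
        * (1 + PowerSeries.X ^ 2 * g)) :
    (∀ n m : ℕ,
      (PowerSeries.coeff (2 * n) g).coeff (2 * m)
        = catC ((n : ℤ) - m) * zchoose ((n : ℤ) + m) (3 * (m : ℤ) - n)) ∧
    (∀ n m : ℕ,
      (PowerSeries.coeff (2 * n + 1) g).coeff (2 * m + 1)
        = catC ((n : ℤ) - m) * zchoose ((n : ℤ) + 1 + m) (3 * (m : ℤ) + 1 - n)) ∧
    (∀ a b : ℕ, Odd (a + b) → (PowerSeries.coeff a g).coeff b = 0) := by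
  have key : ∀ a b : ℕ, (PowerSeries.coeff a g).coeff b
      = ∑ k ∈ range (a + 1),
          if 3 * k ≤ a ∧ b + 2 * k = a then
            ((catalan k : ℚ) * ((a - k).choose (a - 3 * k) : ℚ)) else 0 := by
    intro a b
    rw [gcoeff heq a, Polynomial.finset_sum_coeff]
    exact Finset.sum_congr rfl fun k _ => term_coeff a k b
  refine ⟨?_, ?_, ?_⟩
  · intro n m
    rw [key]
    by_cases hmn : m ≤ n
    · by_cases h3 : n ≤ 3 * m
      · rw [Finset.sum_eq_single_of_mem (n - m) (Finset.mem_range.mpr (by omega))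
          (fun j hj hne => if_neg (by omega))]
        rw [if_pos ⟨by omega, by omega⟩]
        rw [catC, zchoose, if_pos (by omega), if_pos ⟨by omega, by omega⟩]
        have e1 : ((n : ℤ) - m).toNat = n - m := by omega
        have e2 : ((n : ℤ) + m).toNat = n + m := by omega
        have e3 : (3 * (m : ℤ) - n).toNat = 3 * m - n := by omega
        rw [e1, e2, e3, cat_cast]
        rw [show 2 * n - (n - m) = n + m by omega, show 2 * n - 3 * (n - m) = 3 * m - n by omega]
      · rw [Finset.sum_eq_zero (fun j hj => if_neg (by omega))]
        rw [zchoose, if_neg (by omega), mul_zero]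
    · rw [Finset.sum_eq_zero (fun j hj => if_neg (by omega))]
      rw [catC, if_neg (by omega), zero_mul]
  · intro n m
    rw [key]
    by_cases hmn : m ≤ n
    · by_cases h3 : n ≤ 3 * m + 1
      · rw [Finset.sum_eq_single_of_mem (n - m) (Finset.mem_range.mpr (by omega))
          (fun j hj hne => if_neg (by omega))]
        rw [if_pos ⟨by omega, by omega⟩]
        rw [catC, zchoose, if_pos (by omega), if_pos ⟨by omega, by omega⟩]
        have e1 : ((n : ℤ) - m).toNat = n - m := by omega
        have e2 : ((n : ℤ) + 1 + m).toNat = n + 1 + m := by omega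
        have e3 : (3 * (m : ℤ) + 1 - n).toNat = 3 * m + 1 - n := by omega
        rw [e1, e2, e3, cat_cast]
        rw [show 2 * n + 1 - (n - m) = n + 1 + m by omega,
          show 2 * n + 1 - 3 * (n - m) = 3 * m + 1 - n by omega]
      · rw [Finset.sum_eq_zero (fun j hj => if_neg (by omega))]
        rw [zchoose, if_neg (by omega), mul_zero]
    · rw [Finset.sum_eq_zero (fun j hj => if_neg (by omega))]
      rw [catC, if_neg (by omega), zero_mul]
  · intro a b hodd
    rw [Nat.odd_iff] at hodd
    rw [key]
    exact Finset.sum_eq_zero fun k _ => if_neg (by omega)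
end

section
/- Let C(x) = (1 - sqrt(1-4x))/(2x) be the Catalan generating function and let g(x) be the unique formal power series with g(0)=1 satisfying g(x) = 1 + t x g(x) C(x^2 g(x)) over Q[t], i.e. g = 1 + t x g (1 - sqrt(1 - 4 x^2 g))/(2 x^2 g). Then g(x) = (1 + (2/t - t) x - sqrt(1 - 2 t x + (t^2 - 4) x^2)) * t/(2x), and its coefficients are [x^{2n} t^{2m}] g = C_{n-m} binom(2n-1, 2m-1) and [x^{2n+1} t^{2m+1}] g = C_{n-m} binom(2n, 2m), where C_k is the k-th Catalan number (0 for k<0). -/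
open Finset PowerSeries

noncomputable def U : PowerSeries ℚ := PowerSeries.mk fun _ => (1 : ℚ)

@[simp] lemma coeff_U (j : ℕ) : PowerSeries.coeff (R := ℚ) j U = 1 := by
  simp [U]

lemma coeff_U_pow (d j : ℕ) : PowerSeries.coeff (R := ℚ) j (U ^ (d+1)) = ((d+j).choose d : ℚ) := by
  induction d generalizing j with
  | zero => simp
  | succ d ih =>
    rw [pow_succ, PowerSeries.coeff_mul,
      Finset.sum_congr rfl (fun p hp => by rw [ih, coeff_U, mul_one]),
      Finset.Nat.sum_antidiagonal_eq_sum_range_succ_mk]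
    have h := Nat.sum_range_add_choose j d
    have : ∑ i ∈ range (j+1), ((d+i).choose d : ℚ) = (((j+d+1).choose (d+1) : ℕ) : ℚ) := by
      rw [← h]
      push_cast
      exact Finset.sum_congr rfl (fun i _ => by rw [add_comm d i])
    rw [Nat.succ_eq_add_one, this]
    congr 2
    omega

noncomputable def B (r : ℕ) : PowerSeries ℚ := PowerSeries.X ^ r * U ^ (r+1)

lemma coeff_B (r j : ℕ) : PowerSeries.coeff (R := ℚ) j (B r) = (j.choose r : ℚ) := by
  rw [B, PowerSeries.coeff_X_pow_mul']
  rcases le_or_gt r j with h | h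
  · rw [if_pos h, coeff_U_pow]
    congr 2
    omega
  · rw [if_neg (by omega), Nat.choose_eq_zero_of_lt h]
    simp

lemma chooseConv (M r s : ℕ) :
    ∑ p ∈ antidiagonal M, ((p.1.choose r : ℚ) * (p.2.choose s : ℚ)) = ((M+1).choose (r+s+1) : ℚ) := by
  have h1 : B r * B s = B (r+s) * U := by
    simp only [B]
    simp only [pow_add, pow_succ, pow_zero]
    ring
  have h2 := congrArg (PowerSeries.coeff (R := ℚ) M) h1
  rw [PowerSeries.coeff_mul, PowerSeries.coeff_mul] at h2
  simp only [coeff_B, coeff_U, mul_one] at h2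
  rw [h2, Finset.Nat.sum_antidiagonal_eq_sum_range_succ_mk]
  have : ∑ i ∈ range (M+1), ((i.choose (r+s) : ℚ)) = (((M+1).choose (r+s+1) : ℕ) : ℚ) := by
    rw [← Nat.cast_sum]
    norm_cast
    rw [← Nat.sum_Icc_choose]
    refine (Finset.sum_subset ?_ ?_).symm
    · intro x hx; simp at hx ⊢; omega
    · intro x hx hx2
      simp at hx hx2
      exact Nat.choose_eq_zero_of_lt (by omega)
  rw [Nat.succ_eq_add_one, ← this]

lemma regroup {M : Type*} [AddCommMonoid M] (N : ℕ) (h : ℕ → ℕ → M)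
    (hv : ∀ k l, N ≤ k + l → h k l = 0) :
    ∑ k ∈ range N, ∑ l ∈ range N, h k l = ∑ K ∈ range N, ∑ p ∈ antidiagonal K, h p.1 p.2 := by
  have hdisj : (↑(range N) : Set ℕ).PairwiseDisjoint (fun K => antidiagonal K) := by
    intro a _ b _ hab
    simp only [Finset.disjoint_left]
    intro p hpa hpb
    rw [Finset.HasAntidiagonal.mem_antidiagonal] at hpa hpb
    exact hab (hpa ▸ hpb.symm ▸ rfl)
  rw [← Finset.sum_biUnion hdisj, ← Finset.sum_product']
  refine (Finset.sum_subset ?_ ?_).symm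
  · intro p hp
    simp only [Finset.mem_biUnion, Finset.HasAntidiagonal.mem_antidiagonal] at hp
    obtain ⟨K, hK, rfl⟩ := hp
    simp only [Finset.mem_product, Finset.mem_range] at *
    omega
  · intro p hp hnp
    simp only [Finset.mem_biUnion, Finset.HasAntidiagonal.mem_antidiagonal, Finset.mem_range] at hnp
    push_neg at hnp
    exact hv p.1 p.2 (by by_contra hc; exact absurd (hnp (p.1+p.2) (by omega)) (by simp))

noncomputable def dsum (m : ℕ) : Polynomial ℚ :=
  ∑ k ∈ range m, Polynomial.C ((catalan k : ℚ) * ((m-1).choose (2*k) : ℚ)) * Polynomial.X ^ (m - 2*k)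

lemma dsum_ext {m N : ℕ} (h1 : 1 ≤ m) (h : m ≤ N) :
    dsum m = ∑ k ∈ range N,
      Polynomial.C ((catalan k : ℚ) * ((m-1).choose (2*k) : ℚ)) * Polynomial.X ^ (m - 2*k) := by
  apply Finset.sum_subset (by intro x hx; simp at *; omega)
  intro k _ hk
  simp only [Finset.mem_range, not_lt] at hk
  rw [Nat.choose_eq_zero_of_lt (by omega)]
  simp

lemma polyId_aux (n : ℕ) :
    Polynomial.X * dsum (n+3)
      = Polynomial.X^2 * dsum (n+2) + ∑ p ∈ antidiagonal (n+2), dsum p.1 * dsum p.2 := by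
  set N := n + 3 with hN
  have hd0 : dsum 0 = 0 := by simp [dsum]
  -- Step 1: border removal
  have step1 : ∑ p ∈ antidiagonal (n+2), dsum p.1 * dsum p.2
      = ∑ p ∈ antidiagonal n, dsum (p.1+1) * dsum (p.2+1) := by
    rw [Finset.Nat.antidiagonal_succ_succ', Finset.sum_cons, Finset.sum_cons, Finset.sum_map]
    simp [hd0]
  -- Step 2-4: expand and normalize
  have step2 : ∑ p ∈ antidiagonal n, dsum (p.1+1) * dsum (p.2+1)
      = ∑ p ∈ antidiagonal n, ∑ k ∈ range N, ∑ l ∈ range N,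
          Polynomial.C (((catalan k : ℚ) * (catalan l : ℚ))
              * ((p.1.choose (2*k) : ℚ) * (p.2.choose (2*l) : ℚ)))
            * Polynomial.X ^ (n+2-2*(k+l)) := by
    refine Finset.sum_congr rfl ?_
    rintro ⟨i, j⟩ hp
    rw [Finset.HasAntidiagonal.mem_antidiagonal] at hp
    have hp' : i + j = n := hp
    clear hp
    have hi : i + 1 ≤ N := by omega
    have hj : j + 1 ≤ N := by omega
    rw [dsum_ext (by omega) hi, dsum_ext (by omega) hj, Finset.sum_mul_sum]
    refine Finset.sum_congr rfl fun k _ => Finset.sum_congr rfl fun l _ => ?_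
    simp only [Nat.add_sub_cancel]
    by_cases h2k : 2*k ≤ i
    · by_cases h2l : 2*l ≤ j
      · rw [mul_mul_mul_comm, ← Polynomial.C_mul, ← pow_add,
          show i+1-2*k + (j+1-2*l) = n+2-2*(k+l) by omega]
        ring_nf
      · rw [show (j.choose (2*l)) = 0 from Nat.choose_eq_zero_of_lt (by omega)]
        simp
    · rw [show (i.choose (2*k)) = 0 from Nat.choose_eq_zero_of_lt (by omega)]
      simp
  -- Step 5-6: swap sums, apply chooseConv
  have step56 : ∑ p ∈ antidiagonal n, ∑ k ∈ range N, ∑ l ∈ range N,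
          Polynomial.C (((catalan k : ℚ) * (catalan l : ℚ))
              * ((p.1.choose (2*k) : ℚ) * (p.2.choose (2*l) : ℚ)))
            * Polynomial.X ^ (n+2-2*(k+l))
      = ∑ k ∈ range N, ∑ l ∈ range N,
          Polynomial.C (((catalan k : ℚ) * (catalan l : ℚ))
              * (((n+1).choose (2*k+2*l+1) : ℚ)))
            * Polynomial.X ^ (n+2-2*(k+l)) := by
    rw [Finset.sum_comm]
    refine Finset.sum_congr rfl fun k _ => ?_
    rw [Finset.sum_comm]
    refine Finset.sum_congr rfl fun l _ => ?_
    rw [← Finset.sum_mul, ← map_sum, ← Finset.mul_sum, chooseConv]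
  -- Step 7: regroup by K = k + l and apply catalan_succ'
  have step7 : ∑ k ∈ range N, ∑ l ∈ range N,
          Polynomial.C (((catalan k : ℚ) * (catalan l : ℚ))
              * (((n+1).choose (2*k+2*l+1) : ℚ)))
            * Polynomial.X ^ (n+2-2*(k+l))
      = ∑ K ∈ range N,
          Polynomial.C ((catalan (K+1) : ℚ) * (((n+1).choose (2*K+1) : ℚ)))
            * Polynomial.X ^ (n+2-2*K) := by
    rw [regroup N _ (fun k l hkl => by
      rw [Nat.choose_eq_zero_of_lt (by omega)]
      simp)]
    refine Finset.sum_congr rfl fun K hK => ?_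
    have : ∀ p ∈ antidiagonal K,
        Polynomial.C (((catalan p.1 : ℚ) * (catalan p.2 : ℚ))
              * (((n+1).choose (2*p.1+2*p.2+1) : ℚ)))
            * Polynomial.X ^ (n+2-2*(p.1+p.2))
        = Polynomial.C (((catalan p.1 : ℚ) * (catalan p.2 : ℚ))
              * (((n+1).choose (2*K+1) : ℚ)))
            * Polynomial.X ^ (n+2-2*K) := by
      rintro ⟨a, b⟩ hp
      rw [Finset.HasAntidiagonal.mem_antidiagonal] at hp
      simp only []
      rw [show 2*a+2*b+1 = 2*K+1 by omega, show a + b = K from hp]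
    rw [Finset.sum_congr rfl this, ← Finset.sum_mul, ← map_sum, ← Finset.sum_mul,
      show ∑ p ∈ antidiagonal K, (catalan p.1 : ℚ) * (catalan p.2 : ℚ)
        = ((catalan (K+1) : ℚ)) from by rw [catalan_succ']; push_cast; rfl]
  rw [step1, step2, step56, step7]
  have hL : Polynomial.X * dsum (n+3) = ∑ k ∈ range (n+3),
      Polynomial.C ((catalan k : ℚ) * ((n+2).choose (2*k) : ℚ)) * Polynomial.X ^ (n+3-2*k+1) := by
    rw [dsum, Finset.mul_sum]
    refine Finset.sum_congr rfl fun k _ => ?_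
    rw [show n+3-1 = n+2 by omega, pow_succ]
    ring
  have hR1 : Polynomial.X^2 * dsum (n+2) = ∑ k ∈ range (n+2),
      Polynomial.C ((catalan k : ℚ) * ((n+1).choose (2*k) : ℚ)) * Polynomial.X ^ (n+2-2*k+2) := by
    rw [dsum, Finset.mul_sum]
    refine Finset.sum_congr rfl fun k _ => ?_
    rw [show n+2-1 = n+1 by omega, pow_add]
    ring
  have hL2 : Polynomial.X * dsum (n+3)
      = (∑ K ∈ range (n+2), Polynomial.C ((catalan (K+1) : ℚ) * ((n+2).choose (2*(K+1)) : ℚ))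
          * Polynomial.X ^ (n+3-2*(K+1)+1)) + Polynomial.X ^ (n+4) := by
    rw [hL, Finset.sum_range_succ']
    congr 1
    simp only [catalan_zero, Nat.cast_one, Nat.mul_zero, Nat.choose_zero_right, one_mul,
      Nat.sub_zero, map_one]
  have hR2 : Polynomial.X^2 * dsum (n+2)
      = (∑ K ∈ range (n+1), Polynomial.C ((catalan (K+1) : ℚ) * ((n+1).choose (2*(K+1)) : ℚ))
          * Polynomial.X ^ (n+2-2*(K+1)+2)) + Polynomial.X ^ (n+4) := by
    rw [hR1, Finset.sum_range_succ']
    congr 1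
    simp only [catalan_zero, Nat.cast_one, Nat.mul_zero, Nat.choose_zero_right, one_mul,
      Nat.sub_zero, map_one]
  have hextL : ∑ K ∈ range (n+2),
      Polynomial.C ((catalan (K+1) : ℚ) * ((n+2).choose (2*(K+1)) : ℚ)) * Polynomial.X ^ (n+3-2*(K+1)+1)
      = ∑ K ∈ range (n+3),
      Polynomial.C ((catalan (K+1) : ℚ) * ((n+2).choose (2*(K+1)) : ℚ)) * Polynomial.X ^ (n+3-2*(K+1)+1) := by
    refine Finset.sum_subset (by intro x hx; simp at *; omega) ?_
    intro K _ hK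
    simp only [Finset.mem_range, not_lt] at hK
    rw [show ((n+2).choose (2*(K+1))) = 0 from Nat.choose_eq_zero_of_lt (by omega)]
    simp
  have hextR : ∑ K ∈ range (n+1),
      Polynomial.C ((catalan (K+1) : ℚ) * ((n+1).choose (2*(K+1)) : ℚ)) * Polynomial.X ^ (n+2-2*(K+1)+2)
      = ∑ K ∈ range (n+3),
      Polynomial.C ((catalan (K+1) : ℚ) * ((n+1).choose (2*(K+1)) : ℚ)) * Polynomial.X ^ (n+2-2*(K+1)+2) := by
    refine Finset.sum_subset (by intro x hx; simp at *; omega) ?_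
    intro K _ hK
    simp only [Finset.mem_range, not_lt] at hK
    rw [show ((n+1).choose (2*(K+1))) = 0 from Nat.choose_eq_zero_of_lt (by omega)]
    simp
  rw [hL2, hR2, hextL, hextR]
  have hterm : ∀ K ∈ range (n+3),
      Polynomial.C ((catalan (K+1) : ℚ) * ((n+2).choose (2*(K+1)) : ℚ)) * Polynomial.X ^ (n+3-2*(K+1)+1)
      = Polynomial.C ((catalan (K+1) : ℚ) * ((n+1).choose (2*(K+1)) : ℚ)) * Polynomial.X ^ (n+2-2*(K+1)+2)
        + Polynomial.C ((catalan (K+1) : ℚ) * ((n+1).choose (2*K+1) : ℚ)) * Polynomial.X ^ (n+2-2*K) := by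
    intro K _
    by_cases hK : 2*K ≤ n
    · rw [show n+3-2*(K+1)+1 = n+2-2*K by omega, show n+2-2*(K+1)+2 = n+2-2*K by omega,
        show 2*(K+1) = (2*K+1)+1 from by ring, show n+2 = (n+1)+1 from rfl,
        Nat.choose_succ_succ]
      push_cast
      rw [mul_add, map_add, add_mul]
      simp only [Nat.succ_eq_add_one]
      ring
    · rw [show ((n+2)).choose (2*(K+1)) = 0 from Nat.choose_eq_zero_of_lt (by omega),
        show ((n+1)).choose (2*(K+1)) = 0 from Nat.choose_eq_zero_of_lt (by omega),
        show ((n+1)).choose ((2*K+1)) = 0 from Nat.choose_eq_zero_of_lt (by omega)]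
      simp
  rw [Finset.sum_congr rfl hterm, Finset.sum_add_distrib]
  ring

lemma polyId (m : ℕ) :
    Polynomial.X * dsum (m+1)
      = Polynomial.X^2 * (dsum m + if m = 0 then 1 else 0)
        + ∑ p ∈ antidiagonal m, dsum p.1 * dsum p.2 := by
  match m with
  | 0 =>
    simp [dsum]
    ring
  | 1 =>
    simp [dsum, Finset.sum_range_succ, Finset.Nat.antidiagonal_succ]
    norm_num
    ring
  | (n+2) =>
    rw [if_neg (by omega), add_zero, polyId_aux n]

lemma dsum_coeff_eq {M b : ℕ} (hb : 1 ≤ b) (hbM : b ≤ M) (hpar : (M - b) % 2 = 0) :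
    (dsum M).coeff b = (catalan ((M-b)/2) : ℚ) * ((M-1).choose (b-1) : ℚ) := by
  rw [dsum, Polynomial.finset_sum_coeff]
  rw [Finset.sum_eq_single ((M-b)/2)]
  · rw [Polynomial.coeff_C_mul, Polynomial.coeff_X_pow, if_pos (by omega), mul_one,
      show (M-1).choose (2*((M-b)/2)) = (M-1).choose (b-1) from by
        rw [show 2*((M-b)/2) = (M-1) - (b-1) by omega]
        exact Nat.choose_symm (by omega)]
  · intro k _ hk
    rw [Polynomial.coeff_C_mul, Polynomial.coeff_X_pow]
    rcases le_or_gt (2*k) (M-1) with h | h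
    · rw [if_neg (by omega), mul_zero]
    · rw [show (M-1).choose (2*k) = 0 from Nat.choose_eq_zero_of_lt (by omega)]
      simp
  · intro hmem
    simp only [Finset.mem_range, not_lt] at hmem
    omega

lemma dsum_coeff_zero {M b : ℕ} (h : b = 0 ∨ M < b ∨ (M + b) % 2 = 1) :
    (dsum M).coeff b = 0 := by
  rw [dsum, Polynomial.finset_sum_coeff]
  apply Finset.sum_eq_zero
  intro k hk
  rcases Nat.eq_zero_or_pos M with rfl | hM
  · simp at hk
  · rw [Polynomial.coeff_C_mul, Polynomial.coeff_X_pow]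
    rcases le_or_gt (2*k) (M-1) with hle | hlt
    · rw [if_neg (by omega), mul_zero]
    · rw [show (M-1).choose (2*k) = 0 from Nat.choose_eq_zero_of_lt (by omega)]
      simp

lemma catC_eq_catalan (j : ℕ) : catC (j : ℤ) = (catalan j : ℚ) := by
  rw [catC, if_pos (Int.ofNat_nonneg j), Int.toNat_natCast]
  have h3 : (j+1) * catalan j = (2*j).choose j := by
    rw [succ_mul_catalan_eq_centralBinom]
    rfl
  have h2 : ((2*j).choose j : ℚ) = ((j:ℚ)+1) * (catalan j : ℚ) := by
    rw [← h3]
    push_cast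
    ring
  rw [h2]
  have : ((j:ℚ)+1) ≠ 0 := by positivity
  field_simp

/-- With `W = C(x²g)` (the Catalan series composed with `x²g`, characterized by
`W(0)=1`, `W = 1 + x²g W²`) and `g` the unique series over `ℚ[t]` with `g(0)=1` and
`g = 1 + t x g C(x²g)` (B-function `t·C(x)`), the closed form
`g = (1 + (2/t - t)x - √(1 - 2tx + (t²-4)x²)) t/(2x)` holds, stated as
`(t + (2-t²)x - 2xg)² = t²(1 - 2tx + (t²-4)x²)`; moreover
`[x^{2n}t^{2m}] g = C_{n-m} binom(2n-1, 2m-1)` for `n ≥ 1`,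
`[x^{2n+1}t^{2m+1}] g = C_{n-m} binom(2n, 2m)`, other coefficients vanish. -/
theorem stmt10 (g W : PowerSeries (Polynomial ℚ))
    (hW0 : PowerSeries.constantCoeff (R := Polynomial ℚ) W = 1)
    (hW : W = 1 + PowerSeries.X ^ 2 * g * W ^ 2)
    (hg0 : PowerSeries.constantCoeff (R := Polynomial ℚ) g = 1)
    (hg : g = 1 + PowerSeries.C (R := Polynomial ℚ) Polynomial.X * PowerSeries.X * g * W) :
    ((PowerSeries.C (R := Polynomial ℚ) Polynomial.X
        + PowerSeries.C (R := Polynomial ℚ) (2 - Polynomial.X ^ 2) * PowerSeries.X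
        - 2 * PowerSeries.X * g) ^ 2
      = PowerSeries.C (R := Polynomial ℚ) (Polynomial.X ^ 2)
        * (1 - 2 * PowerSeries.C (R := Polynomial ℚ) Polynomial.X * PowerSeries.X
          + PowerSeries.C (R := Polynomial ℚ) (Polynomial.X ^ 2 - 4) * PowerSeries.X ^ 2)) ∧
    (∀ n m : ℕ, 1 ≤ n →
      (PowerSeries.coeff (R := Polynomial ℚ) (2 * n) g).coeff (2 * m)
        = catC ((n : ℤ) - m) * zchoose (2 * (n : ℤ) - 1) (2 * (m : ℤ) - 1)) ∧
    (∀ n m : ℕ,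
      (PowerSeries.coeff (R := Polynomial ℚ) (2 * n + 1) g).coeff (2 * m + 1)
        = catC ((n : ℤ) - m) * zchoose (2 * (n : ℤ)) (2 * (m : ℤ))) ∧
    (∀ a b : ℕ, Odd (a + b) → (PowerSeries.coeff (R := Polynomial ℚ) a g).coeff b = 0) := by
  have hgne : g ≠ 0 := by
    intro h; rw [h] at hg0; simp at hg0
  set Ct : PowerSeries (Polynomial ℚ) := PowerSeries.C (R := Polynomial ℚ) Polynomial.X with hCt
  have hrel : Ct * (PowerSeries.X * (g - 1))
      = Ct^2 * (PowerSeries.X^2 * g) + PowerSeries.X^2 * ((g-1)*(g-1)) := by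
    apply mul_left_cancel₀ hgne
    linear_combination (Ct*PowerSeries.X*g
        - PowerSeries.X^2*g*(g - 1 + Ct*PowerSeries.X*g*W)) * hg
      + Ct^2*PowerSeries.X^2*g^2 * hW
  have key : ∀ m : ℕ, PowerSeries.coeff (R := Polynomial ℚ) m g
      = dsum m + (if m = 0 then 1 else 0) := by
    intro m
    induction m using Nat.strong_induction_on with
    | _ m ih =>
      match m with
      | 0 =>
        rw [PowerSeries.coeff_zero_eq_constantCoeff, hg0, if_pos rfl]
        simp [dsum]
      | (m+1) =>
        have h := congrArg (PowerSeries.coeff (R := Polynomial ℚ) (m+2)) hrel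
        rw [← map_pow, map_add, PowerSeries.coeff_C_mul, PowerSeries.coeff_C_mul,
          PowerSeries.coeff_X_pow_mul, PowerSeries.coeff_X_pow_mul,
          show (m+2 : ℕ) = (m+1)+1 from rfl, PowerSeries.coeff_succ_X_mul,
          PowerSeries.coeff_mul] at h
        have e1 : ∀ p : ℕ×ℕ, p ∈ antidiagonal m →
            PowerSeries.coeff (R := Polynomial ℚ) p.1 (g-1) * PowerSeries.coeff (R := Polynomial ℚ) p.2 (g-1)
              = dsum p.1 * dsum p.2 := by
          rintro ⟨a,b⟩ hp
          rw [Finset.HasAntidiagonal.mem_antidiagonal] at hp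
          have hp' : a + b = m := hp
          rw [map_sub, map_sub, ih a (by omega), ih b (by omega),
            PowerSeries.coeff_one, PowerSeries.coeff_one]
          ring
        rw [Finset.sum_congr rfl e1, ih m (by omega)] at h
        have h2 : Polynomial.X * PowerSeries.coeff (R := Polynomial ℚ) (m+1) (g-1)
            = Polynomial.X * dsum (m+1) := h.trans (polyId m).symm
        have h3 := mul_left_cancel₀ Polynomial.X_ne_zero h2
        rw [map_sub, PowerSeries.coeff_one, if_neg (Nat.succ_ne_zero m)] at h3
        rw [if_neg (Nat.succ_ne_zero m), add_zero, ← h3]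
        ring
  refine ⟨?_, ?_, ?_, ?_⟩
  · simp only [map_sub, map_pow, map_ofNat]
    linear_combination (-4 : PowerSeries (Polynomial ℚ)) * hrel
  · intro n m hn
    rw [key (2*n), if_neg (by omega), add_zero]
    rcases Nat.eq_zero_or_pos m with rfl | hm
    · rw [show 2*0 = 0 from rfl, dsum_coeff_zero (Or.inl rfl)]
      simp only [zchoose]
      rw [if_neg (by omega), mul_zero]
    · rcases le_or_gt m n with hmn | hmn
      · rw [dsum_coeff_eq (by omega) (by omega) (by omega),
          show (2*n - 2*m)/2 = n - m by omega,
          show ((n:ℤ) - m) = ((n - m : ℕ) : ℤ) by omega, catC_eq_catalan]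
        simp only [zchoose]
        rw [if_pos ⟨by omega, by omega⟩, show (2*(n:ℤ)-1).toNat = 2*n-1 by omega,
          show (2*(m:ℤ)-1).toNat = 2*m-1 by omega]
      · rw [dsum_coeff_zero (Or.inr (Or.inl (by omega)))]
        simp only [catC]
        rw [if_neg (by omega), zero_mul]
  · intro n m
    rw [key (2*n+1), if_neg (by omega), add_zero]
    rcases le_or_gt m n with hmn | hmn
    · rw [dsum_coeff_eq (by omega) (by omega) (by omega),
        show (2*n+1 - (2*m+1))/2 = n - m by omega,
        show 2*n+1-1 = 2*n by omega, show 2*m+1-1 = 2*m by omega,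
        show ((n:ℤ) - m) = ((n - m : ℕ) : ℤ) by omega, catC_eq_catalan]
      simp only [zchoose]
      rw [if_pos ⟨by omega, by omega⟩, show (2*(n:ℤ)).toNat = 2*n by omega,
        show (2*(m:ℤ)).toNat = 2*m by omega]
    · rw [dsum_coeff_zero (Or.inr (Or.inl (by omega)))]
      simp only [catC]
      rw [if_neg (by omega), zero_mul]
  · intro a b hab
    have hab' : (a + b) % 2 = 1 := Nat.odd_iff.mp hab
    rcases Nat.eq_zero_or_pos a with rfl | ha
    · rw [key 0, if_pos rfl]
      have h0 : dsum 0 = 0 := by simp [dsum]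
      rw [h0, zero_add, Polynomial.coeff_one, if_neg (by omega)]
    · rw [key a, if_neg (by omega), add_zero, dsum_coeff_zero (Or.inr (Or.inr (by omega)))]
end

section
/- For the exponential Riordan matrix of (1, x/(1-x)), whose (n,m) entry is d_{n,m} = (n!/m!) [x^{n-m}] (1/(1-x))^m = (n!/m!) binom(n-1, n-m) (Lah numbers), the generating function of the n-th descending diagonal satisfies sum_{k>=0} d_{n+k, k} x^k = (n+1)! N_n(x)/(1-x)^{2n+1}, where N_n(x) is the n-th Narayana polynomial. -/
open Nat
open Finset


/-- (a+1-b) C(a+1,b) = (a+1) C(a,b) in ℚ, universally. -/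
lemma fact1 (a b : ℕ) :
    ((a : ℚ) + 1 - b) * ((a + 1).choose b) = ((a : ℚ) + 1) * (a.choose b) := by
  rcases le_or_gt b (a + 1) with h | h
  · rcases b with _ | c
    · simp
    · have hnat : (a + 1) * a.choose (c + 1) = (a + 1).choose (c + 1) * (a + 1 - (c + 1)) := by
        rw [← Nat.choose_succ_right_eq, ← Nat.add_one_mul_choose_eq]
      have hle : c ≤ a := by omega
      have := congrArg (fun x : ℕ => (x : ℚ)) hnat
      push_cast [Nat.cast_sub hle] at this
      push_cast
      linarith [this]
  · rw [Nat.choose_eq_zero_of_lt h, Nat.choose_eq_zero_of_lt (by omega)]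
    simp

/-- (j+1) C(n,j+1) = (n-j) C(n,j) in ℚ, for j ≤ n. -/
lemma fact2 (n j : ℕ) (h : j ≤ n) :
    ((j : ℚ) + 1) * (n.choose (j + 1)) = ((n : ℚ) - j) * (n.choose j) := by
  have hnat := Nat.choose_succ_right_eq n j
  have := congrArg (fun x : ℕ => (x : ℚ)) hnat
  push_cast [Nat.cast_sub h] at this
  linarith [this]

/-- The diagonal sum `S(n,k) = Σ_{i<n} C(n,i)C(n,i+1)C(2n+k-(i+1),2n)`. -/
noncomputable def Sq (n k : ℕ) : ℚ :=
  ∑ i ∈ range n, (n.choose i : ℚ) * (n.choose (i + 1)) * ((2 * n + k - (i + 1)).choose (2 * n))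

lemma perterm (n k i : ℕ) (hi : i < n) :
    ((n:ℚ)+k+1)*((n:ℚ)+k) * ((n.choose i : ℚ) * (n.choose (i+1)) * ((2*n+k-(i+1)).choose (2*n)))
      + ((i:ℚ)+1)*i * ((n.choose i : ℚ) * (n.choose (i+1)) * ((2*n+k-i).choose (2*n)))
    = ((k:ℚ)+1)*k * ((n.choose i : ℚ) * (n.choose (i+1)) * ((2*n+k-i).choose (2*n)))
      + ((i:ℚ)+2)*((i:ℚ)+1) * ((n.choose (i+1) : ℚ) * (n.choose (i+2)) * ((2*n+k-(i+1)).choose (2*n))) := by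
  set x1 : ℚ := (n.choose i : ℚ)
  set x2 : ℚ := (n.choose (i+1) : ℚ)
  set x3 : ℚ := (n.choose (i+2) : ℚ)
  set A : ℚ := ((2*n+k-(i+1)).choose (2*n) : ℚ)
  set B : ℚ := ((2*n+k-i).choose (2*n) : ℚ)
  have hi1 : i + 1 ≤ 2*n + k := by omega
  have h1 : ((k:ℚ) - i) * B = ((2*(n:ℚ))+k-i) * A := by
    have := fact1 (2*n+k-(i+1)) (2*n)
    rw [show 2*n+k-(i+1)+1 = 2*n+k-i by omega] at this
    rw [Nat.cast_sub hi1] at this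
    push_cast at this ⊢
    linarith [this]
  have h2 : ((i:ℚ)+1+1) * x3 = ((n:ℚ)-(i+1)) * x2 := by
    have := fact2 n (i+1) (by omega)
    push_cast at this ⊢; linarith [this]
  have h3 : ((i:ℚ)+1) * x2 = ((n:ℚ)-i) * x1 := by
    exact fact2 n i (by omega)
  linear_combination (-((k:ℚ)+i+1))*x1*x2*h1 - ((i:ℚ)+1)*A*x2*h2 - ((n:ℚ)-i-1)*A*x2*h3

lemma tele (n k : ℕ) :
    ((n:ℚ)+k+1)*((n:ℚ)+k) * Sq n k = ((k:ℚ)+1)*k * Sq n (k+1) := by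
  have key : ∀ i ∈ range n,
      ((n:ℚ)+k+1)*((n:ℚ)+k) * ((n.choose i : ℚ) * (n.choose (i+1)) * ((2*n+k-(i+1)).choose (2*n)))
        - ((k:ℚ)+1)*k * ((n.choose i : ℚ) * (n.choose (i+1)) * ((2*n+(k+1)-(i+1)).choose (2*n)))
      = (fun (j : ℕ) => ((j:ℚ)+1)*j * ((n.choose j : ℚ) * (n.choose (j+1)) * ((2*n+k-j).choose (2*n)))) (i+1)
        - (fun (j : ℕ) => ((j:ℚ)+1)*j * ((n.choose j : ℚ) * (n.choose (j+1)) * ((2*n+k-j).choose (2*n)))) i := by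
    intro i hi
    simp only [mem_range] at hi
    have e1 : 2*n+(k+1)-(i+1) = 2*n+k-i := by omega
    rw [e1]
    have := perterm n k i hi
    push_cast at this ⊢
    linarith [this]
  have hsum := Finset.sum_congr rfl key
  rw [Finset.sum_sub_distrib, Finset.sum_range_sub
    (fun (j : ℕ) => ((j:ℚ)+1)*j * ((n.choose j : ℚ) * (n.choose (j+1)) * ((2*n+k-j).choose (2*n))))] at hsum
  norm_num [Nat.choose_succ_self] at hsum
  unfold Sq
  have e : ∑ x ∈ range n, ((k:ℚ)+1)*k*((n.choose x : ℚ) * (n.choose (x+1)) * ((2*n+(k+1)-(x+1)).choose (2*n)))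
      = ((k:ℚ)+1)*k * ∑ x ∈ range n, (n.choose x : ℚ) * (n.choose (x+1)) * ((2*n+(k+1)-(x+1)).choose (2*n)) :=
    (Finset.mul_sum _ _ _).symm
  have e2 : ∑ x ∈ range n, ((n:ℚ)+k+1)*((n:ℚ)+k)*((n.choose x : ℚ) * (n.choose (x+1)) * ((2*n+k-(x+1)).choose (2*n)))
      = ((n:ℚ)+k+1)*((n:ℚ)+k) * ∑ x ∈ range n, (n.choose x : ℚ) * (n.choose (x+1)) * ((2*n+k-(x+1)).choose (2*n)) :=
    (Finset.mul_sum _ _ _).symm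
  push_cast at hsum e e2 ⊢
  linarith [hsum, e, e2]

lemma keyL (n : ℕ) (hn : 1 ≤ n) : ∀ k : ℕ,
    (n:ℚ) * ((n+k).choose n) * ((n+k-1).choose n) = ((n:ℚ)+1) * Sq n k := by
  have base0 : (n:ℚ) * ((n+0).choose n) * ((n+0-1).choose n) = ((n:ℚ)+1) * Sq n 0 := by
    have h1 : (n-1).choose n = 0 := Nat.choose_eq_zero_of_lt (by omega)
    have h2 : Sq n 0 = 0 := by
      unfold Sq
      apply Finset.sum_eq_zero
      intro i hi
      simp only [mem_range] at hi
      rw [Nat.choose_eq_zero_of_lt (show 2*n+0-(i+1) < 2*n by omega)]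
      simp
    simp [h1, h2]
  have base1 : (n:ℚ) * ((n+1).choose n) * ((n+1-1).choose n) = ((n:ℚ)+1) * Sq n 1 := by
    have h2 : Sq n 1 = n := by
      unfold Sq
      rw [Finset.sum_eq_single 0]
      · norm_num
      · intro i hi hne
        simp only [mem_range] at hi
        rw [Nat.choose_eq_zero_of_lt (show 2*n+1-(i+1) < 2*n by omega)]
        simp
      · intro h; simp at h; omega
    rw [h2, Nat.add_sub_cancel, Nat.choose_succ_self_right, Nat.choose_self]
    push_cast
    ring
  intro k
  induction k with
  | zero => exact base0
  | succ j ih =>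
    rcases Nat.eq_zero_or_pos j with hj | hj
    · subst hj; exact base1
    · have hjQ : ((j:ℚ)+1)*j ≠ 0 := by
        have : (0:ℚ) < ((j:ℚ)+1)*j := by positivity
        exact ne_of_gt this
      apply mul_left_cancel₀ hjQ
      have ht := tele n j
      have f1 : ((j:ℚ)+1) * ((n+(j+1)).choose n) = ((n:ℚ)+j+1) * ((n+j).choose n) := by
        have := fact1 (n+j) n
        push_cast at this ⊢
        rw [show n+(j+1) = n+j+1 by ring]
        push_cast
        linarith [this]
      have f2 : (j:ℚ) * ((n+j).choose n) = ((n:ℚ)+j) * ((n+j-1).choose n) := by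
        have := fact1 (n+j-1) n
        rw [show n+j-1+1 = n+j by omega] at this
        rw [Nat.cast_sub (show 1 ≤ n+j by omega)] at this
        push_cast at this ⊢
        linarith [this]
      rw [show n+(j+1)-1 = n+j by omega]
      linear_combination ((n:ℚ))*(j:ℚ)*((n+j).choose n : ℚ)*f1
        + ((n:ℚ))*((n:ℚ)+j+1)*((n+j).choose n : ℚ)*f2
        + ((n:ℚ)+j+1)*((n:ℚ)+j)*ih + ((n:ℚ)+1)*ht

/-- Entries of the exponential Riordan matrix `(1, x/(1-x))_E` (unsigned Lah numbers):
`d_{n,m} = (n!/m!) binom(n-1, n-m)`. -/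
noncomputable def lah (n m : ℕ) : ℚ := (n ! : ℚ) / (m !) * ((n - 1).choose (n - m))

lemma main (n k : ℕ) :
    lah (n + k) k
      = ((n + 1)! : ℚ) * ∑ m ∈ range (n + 1), Nar n m * (((2 * n + k - m).choose (2 * n) : ℚ)) := by
  rcases Nat.eq_zero_or_pos n with hn | hn
  · subst hn
    simp only [lah, Nar, Nat.zero_add, Nat.sub_self, Nat.choose_zero_right]
    have : ((k)! : ℚ) ≠ 0 := by positivity
    simp [div_self this]
  · have hne : n ≠ 0 := by omega
    have hk0 : ((k)! : ℚ) ≠ 0 := by positivity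
    have hnQ : (n : ℚ) ≠ 0 := by positivity
    have hfact : (((n + k)!) : ℚ) = ((n + k).choose n : ℚ) * (n !) * (k !) := by
      have h0 := Nat.add_choose_mul_factorial_mul_factorial k n
      rw [Nat.add_comm k n] at h0
      have h1 : (((n + k)!) : ℚ) = ((n + k).choose n : ℚ) * (k !) * (n !) := by
        exact_mod_cast h0.symm
      rw [h1]; ring
    have hsucc : (((n + 1)!) : ℚ) = ((n : ℚ) + 1) * (n !) := by
      rw [Nat.factorial_succ]; push_cast [Nat.factorial_succ]; ring
    have hlah : lah (n + k) k = ((n + k).choose n : ℚ) * (n !) * (((n + k - 1).choose n : ℚ)) := by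
      unfold lah
      rw [Nat.add_sub_cancel, hfact]
      field_simp
    have hsum : ∑ m ∈ range (n + 1), Nar n m * (((2 * n + k - m).choose (2 * n) : ℚ))
        = Sq n k / n := by
      rw [Finset.sum_range_succ']
      have hz : Nar n 0 * (((2 * n + k - 0).choose (2 * n) : ℚ)) = 0 := by
        simp [Nar, hne]
      rw [hz, add_zero]
      unfold Sq
      rw [Finset.sum_div]
      apply Finset.sum_congr rfl
      intro i _
      have hnar : Nar n (i + 1) = ((n.choose i : ℚ) * (n.choose (i + 1))) / n := by
        simp [Nar, hne]
      rw [hnar]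
      field_simp
    rw [hlah, hsum]
    have hk := keyL n hn k
    rw [hsucc]
    field_simp
    linear_combination hk

/-- The `n`-th descending diagonal of `(1, x/(1-x))_E` has generating function
`(n+1)! N_n(x)/(1-x)^{2n+1}`. -/
theorem stmt12 (n : ℕ) :
    PowerSeries.mk (fun k => lah (n + k) k) * (1 - PowerSeries.X) ^ (2 * n + 1)
      = ((n + 1)! : ℚ) • ∑ m ∈ Finset.range (n + 1),
          PowerSeries.C (Nar n m) * PowerSeries.X ^ m := by
  rw [← PowerSeries.invOneSubPow_inv_eq_one_sub_pow, Units.inv_eq_val_inv,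
    Units.mul_inv_eq_iff_eq_mul]
  ext k
  rw [PowerSeries.coeff_mk, smul_mul_assoc, Finset.sum_mul, map_smul, map_sum]
  have hterm : ∀ m ∈ range (n + 1),
      (PowerSeries.coeff k) ((PowerSeries.C (Nar n m) * PowerSeries.X ^ m) *
        ((PowerSeries.invOneSubPow ℚ (2 * n + 1) : (PowerSeries ℚ)ˣ) : PowerSeries ℚ))
      = Nar n m * (((2 * n + k - m).choose (2 * n) : ℚ)) := by
    intro m hm
    simp only [mem_range] at hm
    rw [mul_assoc, PowerSeries.coeff_C_mul,
      PowerSeries.invOneSubPow_val_succ_eq_mk_add_choose,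
      PowerSeries.coeff_X_pow_mul', PowerSeries.coeff_mk]
    by_cases hmk : m ≤ k
    · rw [if_pos hmk, show 2 * n + (k - m) = 2 * n + k - m by omega]
    · rw [if_neg hmk, Nat.choose_eq_zero_of_lt (by omega)]
      simp
  rw [Finset.sum_congr rfl hterm, smul_eq_mul]
  exact main n k
end

section
/- For the exponential Riordan matrix of (1, x(1+x)), with entries d_{n,m} = (n!/m!) binom(m, n-m), the n-th descending diagonal has generating function sum_{k>=0} d_{n+k,k} x^k = ((2n)!/n!) x^n / (1-x)^{2n+1}. -/
open Nat

/-- Entries of the exponential Riordan matrix `(1, x(1+x))_E`: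
`d_{n,m} = (n!/m!) binom(m, n-m)`. -/
noncomputable def dE (n m : ℕ) : ℚ := (n ! : ℚ) / (m !) * (m.choose (n - m))

lemma mk_eq (n : ℕ) :
    PowerSeries.mk (fun k => dE (n + k) k)
      = ((((2 * n)! : ℚ) / (n !)) • PowerSeries.X ^ n) *
        (PowerSeries.invOneSubPow ℚ (2 * n + 1)).val := by
  rw [PowerSeries.invOneSubPow_val_eq_mk_sub_one_add_choose_of_pos _ _ (Nat.succ_pos _)]
  ext k
  rw [PowerSeries.coeff_mk, smul_mul_assoc, map_smul, smul_eq_mul]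
  rcases le_or_gt n k with h | h
  · obtain ⟨t, rfl⟩ := le_iff_exists_add.mp h
    rw [PowerSeries.coeff_X_pow_mul', if_pos (by omega), Nat.add_sub_cancel_left,
      PowerSeries.coeff_mk, dE]
    simp only [Nat.succ_sub_one]
    rw [show n + (n + t) - (n + t) = n from by omega]
    have h1 : n ≤ n + t := Nat.le_add_right n t
    have h2 : 2 * n ≤ 2 * n + t := Nat.le_add_right _ t
    rw [Nat.cast_choose ℚ h1, Nat.cast_choose ℚ h2, Nat.add_sub_cancel_left,
      Nat.add_sub_cancel_left]
    have f1 : ((n + t)! : ℚ) ≠ 0 := Nat.cast_ne_zero.mpr (Nat.factorial_ne_zero _)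
    have f2 : ((2 * n)! : ℚ) ≠ 0 := Nat.cast_ne_zero.mpr (Nat.factorial_ne_zero _)
    have f3 : ((n)! : ℚ) ≠ 0 := Nat.cast_ne_zero.mpr (Nat.factorial_ne_zero _)
    have f4 : ((t)! : ℚ) ≠ 0 := Nat.cast_ne_zero.mpr (Nat.factorial_ne_zero _)
    have key : (n + (n + t))! = (2 * n + t)! := by ring_nf
    rw [key]
    field_simp
  · rw [PowerSeries.coeff_X_pow_mul', if_neg (by omega), dE]
    simp [dE]
    exact Or.inr (Nat.choose_eq_zero_of_lt h)

/-- The `n`-th descending diagonal of `(1, x(1+x))_E` has generating function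
`((2n)!/n!) xⁿ/(1-x)^{2n+1}`. -/
theorem stmt13 (n : ℕ) :
    PowerSeries.mk (fun k => dE (n + k) k) * (1 - PowerSeries.X) ^ (2 * n + 1)
      = (((2 * n)! : ℚ) / (n !)) • PowerSeries.X ^ n := by
  rw [mk_eq, ← PowerSeries.invOneSubPow_inv_eq_one_sub_pow, mul_assoc,
    (PowerSeries.invOneSubPow ℚ (2 * n + 1)).val_inv, mul_one]
end

section
/- For the exponential Riordan matrix of (1, x C(x)) where C(x) is the Catalan series, with entries d_{n,m} = (n!/m!) [x^{n-m}] C(x)^m = (n!/m!) * (m/(2n-m)) binom(2n-m, n-m) for n >= m >= 1, the n-th descending diagonal (n > 0) has generating function sum_{k>=0} d_{n+k,k} x^k = ((2n)!/n!) * x/(1-x)^{2n+1}. -/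
open Nat

/-- Entries of the exponential Riordan matrix `(1, x C(x))_E` where `C` is the Catalan
series: `d_{n,m} = (n!/m!) (m/(2n-m)) binom(2n-m, n-m)` for `m ≥ 1`,
`d_{n,0} = [n = 0]` (ballot numbers). -/
noncomputable def dC (n m : ℕ) : ℚ :=
  if m = 0 then (if n = 0 then 1 else 0)
  else (n ! : ℚ) / (m !) * ((m : ℚ) / (2 * n - m)) * ((2 * n - m).choose (n - m))

lemma dC_key (n j : ℕ) :
    dC (n + (j + 1)) (j + 1) = ((2 * n)! : ℚ) / (n !) * ((2 * n + j).choose (2 * n)) := by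
  rw [dC, if_neg (Nat.succ_ne_zero j)]
  have hc1 : (2 * (n + (j + 1)) - (j + 1)).choose (n + (j + 1) - (j + 1))
      = (2 * n + j + 1).choose n := by
    congr 1 <;> omega
  rw [hc1]
  have hcast1 : ((2 * n + j + 1).choose n : ℚ)
      = ((2 * n + j + 1)! : ℚ) / ((n !) * ((n + j + 1)!)) := by
    have e : 2 * n + j + 1 - n = n + j + 1 := by omega
    rw [Nat.cast_choose ℚ (by omega), e]
  have hcast2 : ((2 * n + j).choose (2 * n) : ℚ)
      = ((2 * n + j)! : ℚ) / (((2 * n)!) * (j !)) := by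
    have e : 2 * n + j - 2 * n = j := by omega
    rw [Nat.cast_choose ℚ (by omega), e]
  rw [hcast1, hcast2]
  have hsub : ((2 : ℚ) * (↑(n + (j + 1))) - (↑(j + 1))) = (2 * n + j + 1 : ℕ) := by
    push_cast; ring
  rw [hsub]
  have hf1 : ((n + (j + 1))! : ℚ) = ((n + j + 1)! : ℚ) := by norm_num [add_assoc]
  have hf2 : ((j + 1)! : ℚ) = (j + 1) * (j !) := by
    rw [Nat.factorial_succ]; push_cast; ring
  have hf3 : ((2 * n + j + 1)! : ℚ) = (2 * n + j + 1) * ((2 * n + j)!) := by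
    rw [Nat.factorial_succ]; push_cast; ring
  rw [hf1, hf2, hf3]
  have h1 : ((n + j + 1)! : ℚ) ≠ 0 := Nat.cast_ne_zero.mpr (Nat.factorial_ne_zero _)
  have h2 : ((j !) : ℚ) ≠ 0 := Nat.cast_ne_zero.mpr (Nat.factorial_ne_zero _)
  have h3 : ((n !) : ℚ) ≠ 0 := Nat.cast_ne_zero.mpr (Nat.factorial_ne_zero _)
  have h4 : (((2 * n)!) : ℚ) ≠ 0 := Nat.cast_ne_zero.mpr (Nat.factorial_ne_zero _)
  have h5 : ((2 * n + j)! : ℚ) ≠ 0 := Nat.cast_ne_zero.mpr (Nat.factorial_ne_zero _)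
  have h6 : ((2 : ℚ) * n + j + 1) ≠ 0 := by positivity
  have h7 : ((j : ℚ) + 1) ≠ 0 := by positivity
  field_simp
  push_cast; ring

/-- For `n > 0`, the `n`-th descending diagonal of `(1, x C(x))_E` has generating function
`((2n)!/n!) x/(1-x)^{2n+1}`. -/
theorem stmt14 (n : ℕ) (hn : 0 < n) :
    PowerSeries.mk (fun k => dC (n + k) k) * (1 - PowerSeries.X) ^ (2 * n + 1)
      = (((2 * n)! : ℚ) / (n !)) • PowerSeries.X := by
  have hmk : PowerSeries.mk (fun k => dC (n + k) k)
      = (((2 * n)! : ℚ) / (n !)) •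
        (PowerSeries.X * (PowerSeries.invOneSubPow ℚ (2 * n + 1)).val) := by
    rw [PowerSeries.invOneSubPow_val_succ_eq_mk_add_choose]
    ext k
    rw [PowerSeries.coeff_mk, PowerSeries.coeff_smul]
    cases k with
    | zero =>
      simp [dC, hn.ne', PowerSeries.coeff_zero_eq_constantCoeff]
    | succ j =>
      rw [PowerSeries.coeff_succ_X_mul, PowerSeries.coeff_mk, smul_eq_mul]
      exact dC_key n j
  rw [hmk, smul_mul_assoc, mul_assoc, ← PowerSeries.invOneSubPow_inv_eq_one_sub_pow,
    (PowerSeries.invOneSubPow ℚ (2 * n + 1)).val_inv, mul_one]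
end
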